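/- arXiv:1311.3284 — 14 statements merged into one kernel-verified Lean document; each statement's English description precedes it below -/
import Mathlib

section
/- Let C be a code of length n over an alphabet of size q with |C| = q^k, and suppose C has locality r. Then k/n ≤ r/(r+1). -/
/-- A code `C` of length `n` over alphabet `Alph` has locality `r` if for every coordinate `i`
there is a set `I` of at most `r` other coordinates such that any two codewords agreeing on
`I` agree at `i`. -/
def HasLocality {n : ℕ} {Alph : Type*} (C : Finset (Fin n → Alph)) (r : ℕ) : Prop :=
  ∀ i : Fin n, ∃ I : Finset (Fin n), i ∉ I ∧ I.card ≤ r ∧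
    ∀ x ∈ C, ∀ y ∈ C, (∀ j ∈ I, x j = y j) → x i = y i

/-- If `C` is a code of length `n` over an alphabet of size `q` with `|C| = q ^ k` and
`C` has locality `r`, then `k / n ≤ r / (r + 1)`. -/
theorem stmt_0 {n q k r : ℕ} {Alph : Type*} [Fintype Alph] [DecidableEq Alph]
    (hq : 2 ≤ q) (halph : Fintype.card Alph = q)
    (C : Finset (Fin n → Alph)) (hC : C.card = q ^ k)
    (hloc : HasLocality C r) :
    (k : ℚ) / n ≤ (r : ℚ) / (r + 1) := by
  classical
  -- Greedy construction of a determining set S with S.card * (r+1) ≤ n * r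
  have key : ∀ m : ℕ, ∀ S D : Finset (Fin n), n - D.card ≤ m → S ⊆ D →
      (∀ i ∈ D, ∀ x ∈ C, ∀ y ∈ C, (∀ j ∈ S, x j = y j) → x i = y i) →
      S.card * (r + 1) ≤ D.card * r →
      ∃ S' : Finset (Fin n), S'.card * (r + 1) ≤ n * r ∧
        ∀ x ∈ C, ∀ y ∈ C, (∀ j ∈ S', x j = y j) → x = y := by
    intro m
    induction m with
    | zero =>
      intro S D hm hSD hdet hcard
      have hDn : D.card = n := by
        have := Finset.card_le_univ D
        simp [Fintype.card_fin] at this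
        omega
      have hDuniv : D = Finset.univ := Finset.eq_univ_of_card D (by simp [hDn])
      refine ⟨S, by rw [hDn] at hcard; exact hcard, ?_⟩
      intro x hx y hy hagree
      funext i
      exact hdet i (by simp [hDuniv]) x hx y hy hagree
    | succ m ih =>
      intro S D hm hSD hdet hcard
      by_cases hDuniv : D = Finset.univ
      · have hDn : D.card = n := by simp [hDuniv, Fintype.card_fin]
        refine ⟨S, by rw [hDn] at hcard; exact hcard, ?_⟩
        intro x hx y hy hagree
        funext i
        exact hdet i (by simp [hDuniv]) x hx y hy hagree
      · obtain ⟨i, -, hiD⟩ := Finset.exists_of_ssubset (Finset.ssubset_univ_iff.mpr hDuniv)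
        obtain ⟨I, hiI, hIr, hI⟩ := hloc i
        set A : Finset (Fin n) := I \ D with hA
        set S' : Finset (Fin n) := S ∪ A with hS'
        set D' : Finset (Fin n) := insert i (D ∪ A) with hD'
        have hiDA : i ∉ D ∪ A := by
          simp [hA, hiD, hiI]
        have har : A.card ≤ r := le_trans (Finset.card_le_card (Finset.sdiff_subset)) hIr
        have hDA : Disjoint D A := Finset.disjoint_sdiff
        have hD'card : D'.card = D.card + A.card + 1 := by
          rw [hD', Finset.card_insert_of_notMem hiDA, Finset.card_union_of_disjoint hDA]
        have hS'D' : S' ⊆ D' := by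
          intro j hj
          rcases Finset.mem_union.mp hj with h | h
          · exact Finset.mem_insert_of_mem (Finset.mem_union_left _ (hSD h))
          · exact Finset.mem_insert_of_mem (Finset.mem_union_right _ h)
        have hdet' : ∀ j ∈ D', ∀ x ∈ C, ∀ y ∈ C, (∀ l ∈ S', x l = y l) → x j = y j := by
          intro j hj x hx y hy hagree
          have hagreeS : ∀ l ∈ S, x l = y l := fun l hl =>
            hagree l (Finset.mem_union_left _ hl)
          rcases Finset.mem_insert.mp hj with h | h
          · subst h
            apply hI x hx y hy
            intro l hl
            by_cases hlD : l ∈ D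
            · exact hdet l hlD x hx y hy hagreeS
            · exact hagree l (Finset.mem_union_right _ (by simp [hA, hl, hlD]))
          · rcases Finset.mem_union.mp h with h | h
            · exact hdet j h x hx y hy hagreeS
            · exact hagree j (Finset.mem_union_right _ h)
        have hcard' : S'.card * (r + 1) ≤ D'.card * r := by
          have h1 : S'.card ≤ S.card + A.card := Finset.card_union_le _ _
          have h2 : (S.card + A.card) * (r + 1) ≤ (D.card + A.card + 1) * r := by
            nlinarith [hcard, har]
          rw [hD'card]
          calc S'.card * (r + 1) ≤ (S.card + A.card) * (r + 1) :=
                Nat.mul_le_mul_right _ h1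
            _ ≤ (D.card + A.card + 1) * r := h2
        have hm' : n - D'.card ≤ m := by
          rw [hD'card]; omega
        exact ih S' D' hm' hS'D' hdet' hcard'
  obtain ⟨S, hs, hinj⟩ := key n ∅ ∅ (by simp) (by simp) (by simp) (by simp)
  -- C.card ≤ q ^ S.card
  have hCcard : C.card ≤ q ^ S.card := by
    have hmap : C.card ≤ Fintype.card (↥S → Alph) := by
      apply Finset.card_le_card_of_injOn (fun x (j : ↥S) => x j.1)
        (fun x _ => Finset.mem_univ _)
      · intro x hx y hy hxy
        apply hinj x hx y hy
        intro j hj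
        exact congrFun hxy ⟨j, hj⟩
    calc C.card ≤ Fintype.card (↥S → Alph) := hmap
      _ = q ^ S.card := by simp [Fintype.card_fun, halph, Fintype.card_coe]
  have hk : k ≤ S.card := by
    rw [hC] at hCcard
    exact (Nat.pow_le_pow_iff_right (by omega : 1 < q)).mp hCcard
  have hkn : k * (r + 1) ≤ n * r := le_trans (Nat.mul_le_mul_right _ hk) hs
  rcases Nat.eq_zero_or_pos n with hn | hn
  · have hk0 : k = 0 := by
      subst hn; simp at hkn; omega
    simp [hk0]
    positivity
  · rw [div_le_div_iff₀ (by exact_mod_cast hn) (by positivity)]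
    have : (k : ℚ) * (r + 1) ≤ n * r := by exact_mod_cast hkn
    linarith
end

section
/- Let C be a code of length n over an alphabet of size q with |C| = q^k (k ≥ 1), and suppose C has locality r. Then the minimum Hamming distance d of C satisfies d ≤ n − k − ⌈k/r⌉ + 2. -/
section Aux

variable {n q k : ℕ} {Alph : Type*} [Fintype Alph]

/-- If every codeword is determined by its values on `T`, then `|C| ≤ q ^ |T|`. -/
lemma restr_card_le [DecidableEq Alph] (q : ℕ) (halph : Fintype.card Alph = q) (C : Finset (Fin n → Alph))
    (T : Finset (Fin n))
    (hdet : ∀ x ∈ C, ∀ y ∈ C, (∀ a ∈ T, x a = y a) → x = y) :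
    C.card ≤ q ^ T.card := by
  have h := Finset.card_le_card_of_injOn (f := fun (x : Fin n → Alph) (a : T) => x a)
    (t := (Finset.univ : Finset (T → Alph))) (fun x _ => Finset.mem_univ _)
    (by
      intro x hx y hy hxy
      exact hdet x hx y hy (fun a ha => congrFun hxy ⟨a, ha⟩))
  calc C.card ≤ (Finset.univ : Finset (T → Alph)).card := h
    _ = q ^ T.card := by
        rw [Finset.card_univ, Fintype.card_fun, halph, Fintype.card_coe]

/-- Greedy construction of a large set `S` of coordinates on which codewords are
determined by a small subset `T`. -/
lemma build [DecidableEq Alph] (C : Finset (Fin n → Alph)) (r : ℕ) (hloc : HasLocality C r)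
    (hq : 2 ≤ q) (halph : Fintype.card Alph = q) (hk : 1 ≤ k) (hC : C.card = q ^ k) :
    ∀ j, j * r ≤ k - 1 → ∃ S T : Finset (Fin n), T ⊆ S ∧ S.card = T.card + j ∧
      T.card ≤ j * r ∧
      ∀ x ∈ C, ∀ y ∈ C, (∀ a ∈ T, x a = y a) → ∀ a ∈ S, x a = y a := by
  intro j
  induction j with
  | zero =>
    intro _
    exact ⟨∅, ∅, Finset.Subset.refl _, by simp, by simp, by simp⟩
  | succ j ih =>
    intro hjr
    have hjr' : j * r ≤ k - 1 :=
      le_trans (Nat.mul_le_mul_right r (Nat.le_succ j)) hjr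
    obtain ⟨S, T, hTS, hcard, hTr, hagree⟩ := ih hjr'
    have hSne : S ≠ Finset.univ := by
      intro hSu
      have hdet : ∀ x ∈ C, ∀ y ∈ C, (∀ a ∈ T, x a = y a) → x = y := by
        intro x hx y hy hagr
        funext a
        exact hagree x hx y hy hagr a (hSu ▸ Finset.mem_univ a)
      have hle := restr_card_le q halph C T hdet
      rw [hC] at hle
      have hk' : k ≤ T.card := (Nat.pow_le_pow_iff_right (by omega)).mp hle
      omega
    obtain ⟨i, hi⟩ : ∃ i, i ∉ S := by
      by_contra h
      push_neg at h
      exact hSne (Finset.eq_univ_iff_forall.mpr h)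
    obtain ⟨I, hiI, hIr, hIdet⟩ := hloc i
    have hiSU : i ∉ S ∪ I := by simp [hi, hiI]
    have hdisjS : Disjoint S (I \ S) := Finset.disjoint_sdiff
    have hdisjT : Disjoint T (I \ S) := hdisjS.mono_left hTS
    refine ⟨insert i (S ∪ I), T ∪ (I \ S), ?_, ?_, ?_, ?_⟩
    · intro a ha
      rcases Finset.mem_union.mp ha with h | h
      · exact Finset.mem_insert_of_mem (Finset.mem_union_left _ (hTS h))
      · exact Finset.mem_insert_of_mem (Finset.mem_union_right _ (Finset.mem_sdiff.mp h).1)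
    · have h1 : (insert i (S ∪ I)).card = (S ∪ I).card + 1 :=
        Finset.card_insert_of_notMem hiSU
      have h2 : S ∪ I = S ∪ (I \ S) := (Finset.union_sdiff_self_eq_union).symm
      have h3 : (S ∪ (I \ S)).card = S.card + (I \ S).card :=
        Finset.card_union_of_disjoint hdisjS
      have h4 : (T ∪ (I \ S)).card = T.card + (I \ S).card :=
        Finset.card_union_of_disjoint hdisjT
      rw [h1, h2, h3, h4]
      omega
    · have h4 : (T ∪ (I \ S)).card = T.card + (I \ S).card :=
        Finset.card_union_of_disjoint hdisjT
      have h5 : (I \ S).card ≤ r := le_trans (Finset.card_le_card (Finset.sdiff_subset)) hIr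
      rw [h4]
      calc T.card + (I \ S).card ≤ j * r + r := by omega
        _ = (j + 1) * r := by ring
    · intro x hx y hy hag a ha
      have hagS : ∀ b ∈ S, x b = y b :=
        hagree x hx y hy (fun b hb => hag b (Finset.mem_union_left _ hb)) 
      have hagI : ∀ b ∈ I, x b = y b := by
        intro b hb
        by_cases hbS : b ∈ S
        · exact hagS b hbS
        · exact hag b (Finset.mem_union_right _ (Finset.mem_sdiff.mpr ⟨hb, hbS⟩))
      rcases Finset.mem_insert.mp ha with rfl | h
      · exact hIdet x hx y hy hagI
      · rcases Finset.mem_union.mp h with h | h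
        · exact hagS a h
        · exact hagI a h

end Aux

/-- If `C` is a code of length `n` over an alphabet of size `q` with `|C| = q ^ k` (`k ≥ 1`)
and `C` has locality `r`, then the minimum Hamming distance `d` of `C` satisfies
`d ≤ n - k - ⌈k / r⌉ + 2`. -/
theorem stmt_1 {n q k r d : ℕ} {Alph : Type*} [Fintype Alph] [DecidableEq Alph]
    (hq : 2 ≤ q) (hk : 1 ≤ k) (halph : Fintype.card Alph = q)
    (C : Finset (Fin n → Alph)) (hC : C.card = q ^ k)
    (hloc : HasLocality C r)
    (hd : IsLeast {d' : ℕ | ∃ x ∈ C, ∃ y ∈ C, x ≠ y ∧ hammingDist x y = d'} d) :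
    (d : ℤ) ≤ (n : ℤ) - (k : ℤ) - ⌈(k : ℚ) / (r : ℚ)⌉ + 2 := by
  -- rule out r = 0
  rcases Nat.eq_zero_or_pos r with hr0 | hrpos
  · exfalso
    subst hr0
    have hone : C.card ≤ 1 := by
      apply Finset.card_le_one.mpr
      intro x hx y hy
      funext i
      obtain ⟨I, _, hIcard, hIdet⟩ := hloc i
      have : I = ∅ := Finset.card_eq_zero.mp (Nat.le_zero.mp hIcard)
      exact hIdet x hx y hy (by simp [this])
    have : 2 ≤ q ^ k := le_trans hq (Nat.le_self_pow (by omega) q)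
    omega
  set t : ℕ := (k - 1) / r with ht
  have htr : t * r ≤ k - 1 := Nat.div_mul_le_self _ _
  have htr2 : k ≤ (t + 1) * r := by
    have h1 : r * ((k - 1) / r) + (k - 1) % r = k - 1 := Nat.div_add_mod (k - 1) r
    have h2 : (k - 1) % r < r := Nat.mod_lt _ hrpos
    have h3 : (t + 1) * r = r * ((k - 1) / r) + r := by rw [ht]; ring
    omega
  obtain ⟨S, T, hTS, hScard, hTr, hagree⟩ :=
    build C r hloc hq halph hk hC t htr
  have hceil : ⌈(k : ℚ) / (r : ℚ)⌉ = (t : ℤ) + 1 := by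
    rw [Int.ceil_eq_iff]
    have hr' : (0 : ℚ) < (r : ℚ) := by exact_mod_cast hrpos
    constructor
    · rw [lt_div_iff₀ hr']
      push_cast
      have hk1 : 1 ≤ k := hk
      have : (t : ℚ) * r ≤ (k : ℚ) - 1 := by
        have := htr
        have hcast : ((t * r : ℕ) : ℚ) ≤ ((k - 1 : ℕ) : ℚ) := by exact_mod_cast this
        push_cast [Nat.cast_sub hk1] at hcast
        exact hcast
      linarith
    · rw [div_le_iff₀ hr']
      push_cast
      exact_mod_cast htr2
  rw [hceil]
  -- now main argument
  have hTk : T.card ≤ k - 1 := le_trans hTr htr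
  by_cases hn : k - 1 + t ≤ n
  · -- extend S to size k - 1 + t
    obtain ⟨S', hSS', hS'card⟩ := Finset.exists_superset_card_eq
      (s := S) (n := k - 1 + t) (by omega) (by simpa using hn)
    set T' := T ∪ (S' \ S) with hT'
    have hsub : S ⊆ S' := hSS'
    have hT'card : T'.card ≤ k - 1 := by
      have hdisj : Disjoint T (S' \ S) := Finset.disjoint_sdiff.mono_left hTS
      have h1 : T'.card = T.card + (S' \ S).card := Finset.card_union_of_disjoint hdisj
      have h2 : (S' \ S).card = S'.card - S.card := Finset.card_sdiff_of_subset hsub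
      have h3 : S.card ≤ S'.card := Finset.card_le_card hsub
      omega
    have hdet : ∀ x ∈ C, ∀ y ∈ C, (∀ a ∈ T', x a = y a) → ∀ a ∈ S', x a = y a := by
      intro x hx y hy hag a ha
      by_cases haS : a ∈ S
      · exact hagree x hx y hy (fun b hb => hag b (Finset.mem_union_left _ hb)) a haS
      · exact hag a (Finset.mem_union_right _ (Finset.mem_sdiff.mpr ⟨ha, haS⟩))
    -- pigeonhole: two distinct codewords agree on T'
    have hlt : (Finset.univ : Finset (T' → Alph)).card < C.card := by
      rw [Finset.card_univ, Fintype.card_fun, halph, Fintype.card_coe, hC]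
      calc q ^ T'.card ≤ q ^ (k - 1) := Nat.pow_le_pow_right (by omega) hT'card
        _ < q ^ k := Nat.pow_lt_pow_right (by omega) (by omega)
    obtain ⟨x, hx, y, hy, hne, hxy⟩ := Finset.exists_ne_map_eq_of_card_lt_of_maps_to hlt
      (f := fun (x : Fin n → Alph) (a : T') => x a) (fun x _ => Finset.mem_univ _)
    have hagT' : ∀ a ∈ T', x a = y a := fun a ha => congrFun hxy ⟨a, ha⟩
    have hagS' : ∀ a ∈ S', x a = y a := hdet x hx y hy hagT'
    have hdist : hammingDist x y ≤ n - (k - 1 + t) := by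
      have hsubset : ({i | x i ≠ y i} : Finset (Fin n)) ⊆ S'ᶜ := by
        intro i hi
        simp only [Finset.mem_filter, Finset.mem_univ, true_and] at hi
        rw [Finset.mem_compl]
        intro hiS'
        exact hi (hagS' i hiS')
      calc hammingDist x y ≤ S'ᶜ.card := Finset.card_le_card hsubset
        _ = n - (k - 1 + t) := by
          rw [Finset.card_compl, hS'card]
          simp
    have hdle : d ≤ n - (k - 1 + t) := by
      have : d ≤ hammingDist x y := hd.2 ⟨x, hx, y, hy, hne, rfl⟩
      omega
    have : (d : ℤ) ≤ (n : ℤ) - (k - 1 + t : ℕ) := by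
      have h1 : (d : ℤ) ≤ ((n - (k - 1 + t) : ℕ) : ℤ) := by exact_mod_cast hdle
      omega
    push_cast at this ⊢
    omega
  · -- impossible: n < k - 1 + t leads to contradiction
    exfalso
    set T' := T ∪ ((Finset.univ : Finset (Fin n)) \ S) with hT'
    have hSn : S.card ≤ n := by
      have := Finset.card_le_univ S
      simpa using this
    have hT'card : T'.card ≤ n - t := by
      have hdisj : Disjoint T ((Finset.univ : Finset (Fin n)) \ S) :=
        Finset.disjoint_sdiff.mono_left hTS
      have h1 : T'.card = T.card + ((Finset.univ : Finset (Fin n)) \ S).card :=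
        Finset.card_union_of_disjoint hdisj
      have h2 : ((Finset.univ : Finset (Fin n)) \ S).card = n - S.card := by
        rw [Finset.card_sdiff_of_subset (Finset.subset_univ S)]
        simp
      omega
    have hdet : ∀ x ∈ C, ∀ y ∈ C, (∀ a ∈ T', x a = y a) → x = y := by
      intro x hx y hy hag
      funext a
      by_cases haS : a ∈ S
      · exact hagree x hx y hy (fun b hb => hag b (Finset.mem_union_left _ hb)) a haS
      · exact hag a (Finset.mem_union_right _ (Finset.mem_sdiff.mpr ⟨Finset.mem_univ a, haS⟩))
    have hle := restr_card_le q halph C T' hdet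
    rw [hC] at hle
    have hk' : k ≤ T'.card := (Nat.pow_le_pow_iff_right (by omega)).mp hle
    omega
end

section
/- Let G be a finite directed graph on n ≥ 1 vertices, and for each vertex i let d_i^out denote its out-degree. Then there exists a subset U of vertices with |U| ≥ n / (1 + (1/n)·∑_i d_i^out) such that the induced directed subgraph of G on U is acyclic. -/
/-!
Directed Caro–Wei.  Pick a vertex `v` of minimum out-degree `d`, delete `v` together with its
out-neighbours, recurse, and put `v` back: `v` has no out-edge into what the recursion kept, so
no cycle goes through it.  The at most `d + 1` deleted vertices each contribute at most `1 / (d + 1)` to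
`∑ᵥ 1 / (d⁺(v) + 1)`, while deleting vertices only raises the terms of the survivors, so the
kept set has at least that many vertices.  Cauchy–Schwarz (in Titu's form) then bounds this
sum from below by `n² / ∑ᵥ (d⁺(v) + 1) = n / (1 + (∑ᵥ d⁺(v)) / n)`.
-/

open Finset

section Acyclic

variable {V : Type*} (E : V → V → Prop)

def InducedRel (U : Finset V) (a b : V) : Prop := a ∈ U ∧ b ∈ U ∧ E a b

def IsAcyclicOn (U : Finset V) : Prop :=
  ∀ v ∈ U, ∀ w ∈ U, E v w → ¬ Relation.ReflTransGen (InducedRel E U) w v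

variable {E} [DecidableEq V]

theorem reflTransGen_inducedRel_of_insert {v : V} {U : Finset V} (hv : ∀ w ∈ U, ¬ E v w)
    {w u : V} (h : Relation.ReflTransGen (InducedRel E (insert v U)) w u) (hu : u ∈ U) :
    w ∈ U ∧ Relation.ReflTransGen (InducedRel E U) w u := by
  induction h using Relation.ReflTransGen.head_induction_on with
  | refl => exact ⟨hu, .refl⟩
  | @head x c hxc _ ih =>
    obtain ⟨hx, -, hE⟩ := hxc
    obtain ⟨hc, hcu⟩ := ih
    have hxU : x ∈ U := by
      rcases mem_insert.mp hx with rfl | hxU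
      · exact absurd hE (hv c hc)
      · exact hxU
    exact ⟨hxU, .head ⟨hxU, hc, hE⟩ hcu⟩

theorem IsAcyclicOn.insert {v : V} {U : Finset V} (hU : IsAcyclicOn E U) (hvv : ¬ E v v)
    (hv : ∀ w ∈ U, ¬ E v w) : IsAcyclicOn E (insert v U) := by
  intro a ha b hb hab hba
  rcases mem_insert.mp ha with rfl | haU
  · rcases mem_insert.mp hb with rfl | hbU
    · exact hvv hab
    · exact hv b hbU hab
  · obtain ⟨hbU, hba'⟩ := reflTransGen_inducedRel_of_insert hv hba haU
    exact hU a haU b hbU hab hba'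

end Acyclic

theorem Finset.sum_one_div_le_one_of_card_le {α K : Type*} [Field K] [LinearOrder K]
    [IsStrictOrderedRing K] {A : Finset α} {f : α → K} {c : K} (hc : 0 < c)
    (hf : ∀ u ∈ A, c ≤ f u) (hA : (#A : K) ≤ c) : ∑ u ∈ A, 1 / f u ≤ 1 :=
  calc ∑ u ∈ A, 1 / f u ≤ ∑ _u ∈ A, 1 / c :=
        sum_le_sum fun u hu => one_div_le_one_div_of_le hc (hf u hu)
    _ = #A / c := by rw [sum_const, nsmul_eq_mul, mul_one_div]
    _ ≤ 1 := (div_le_one hc).mpr hA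

theorem exists_isAcyclicOn_subset_sum_one_div_le {V K : Type*} [DecidableEq V] [Field K]
    [LinearOrder K] [IsStrictOrderedRing K] {E : V → V → Prop} [DecidableRel E]
    (hirr : ∀ v, ¬ E v v) (S : Finset V) :
    ∃ U ⊆ S, IsAcyclicOn E U ∧ ∑ v ∈ S, 1 / ((#(S.filter (E v)) : K) + 1) ≤ #U := by
  induction S using Finset.strongInduction with
  | H S ih =>
  rcases S.eq_empty_or_nonempty with rfl | hS
  · exact ⟨∅, subset_refl _, by simp [IsAcyclicOn], by simp⟩
  obtain ⟨v, hv, hmin⟩ := S.exists_min_image (fun u => #(S.filter (E u))) hS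
  set R := insert v (S.filter (E v))
  have hRS : R ⊆ S := insert_subset hv (filter_subset _ _)
  have hvR : v ∈ R := mem_insert_self _ _
  obtain ⟨U, hUsub, hU, hcard⟩ := ih (S \ R) (sdiff_ssubset hRS ⟨v, hvR⟩)
  have hvU : v ∉ U := fun h => (mem_sdiff.mp (hUsub h)).2 hvR
  have hout : ∀ w ∈ U, ¬ E v w := fun w hw hvw =>
    have hw' := mem_sdiff.mp (hUsub hw)
    hw'.2 (mem_insert_of_mem (mem_filter.mpr ⟨hw'.1, hvw⟩))
  refine ⟨insert v U, insert_subset hv (hUsub.trans sdiff_subset), hU.insert (hirr v) hout, ?_⟩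
  have hdeleted : ∑ u ∈ R, 1 / ((#(S.filter (E u)) : K) + 1) ≤ 1 := by
    refine sum_one_div_le_one_of_card_le (c := (#(S.filter (E v)) : K) + 1)
      (by positivity) (fun u hu => ?_) ?_
    · exact_mod_cast Nat.add_le_add_right (hmin u (hRS hu)) 1
    · exact_mod_cast card_insert_le _ _
  have hkept : ∑ u ∈ S \ R, 1 / ((#(S.filter (E u)) : K) + 1) ≤ #U := by
    refine le_trans (sum_le_sum fun u _ => ?_) hcard
    gcongr
    exact sdiff_subset
  rw [← sum_sdiff hRS, card_insert_of_notMem hvU, Nat.cast_succ]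
  linarith

theorem stmt_2_general {V : Type*} [Fintype V] [DecidableEq V]
    (E : V → V → Prop) [DecidableRel E]
    (hirr : ∀ v, ¬ E v v) :
    ∃ U : Finset V,
      (Fintype.card V : ℚ) /
          (1 + (∑ i, ((Finset.univ.filter fun j => E i j).card : ℚ)) / (Fintype.card V : ℚ))
        ≤ (U.card : ℚ) ∧
      ∀ v ∈ U, ∀ w ∈ U, E v w →
        ¬ Relation.ReflTransGen (fun a b => a ∈ U ∧ b ∈ U ∧ E a b) w v := by
  obtain ⟨U, -, hU, hcard⟩ := exists_isAcyclicOn_subset_sum_one_div_le (K := ℚ) hirr univ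
  refine ⟨U, ?_, hU⟩
  set n : ℚ := (Fintype.card V : ℚ)
  set D : ℚ := ∑ i, (#(univ.filter (E i)) : ℚ)
  have hsum : ∑ i, ((#(univ.filter (E i)) : ℚ) + 1) = D + n := by
    simp [D, n, sum_add_distrib]
  have hones : ∑ _i : V, (1 : ℚ) = n := by simp [n]
  calc n / (1 + D / n)
        = (∑ _i : V, (1 : ℚ)) ^ 2 / ∑ i, ((#(univ.filter (E i)) : ℚ) + 1) := by
        rw [hones, hsum]
        rcases eq_or_ne n 0 with hn | hn
        · simp [hn]
        · field_simp
          ring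
    _ ≤ ∑ i, 1 ^ 2 / ((#(univ.filter (E i)) : ℚ) + 1) :=
        sq_sum_div_le_sum_sq_div _ _ fun i _ => by positivity
    _ ≤ #U := by simpa using hcard

/-- Every finite directed graph (without self-loops) on `n ≥ 1` vertices contains an induced
acyclic subgraph on a vertex set `U` with `|U| ≥ n / (1 + (∑ i, d_i^out) / n)`, where
`d_i^out` is the out-degree of vertex `i`.  Acyclicity of the induced subgraph is expressed
by saying that for no edge `v → w` with `v, w ∈ U` is there a directed path inside `U`
from `w` back to `v`. -/
theorem stmt_2 {V : Type*} [Fintype V] [DecidableEq V]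
    (E : V → V → Prop) [DecidableRel E]
    (hirr : ∀ v, ¬ E v v)
    (hn : 1 ≤ Fintype.card V) :
    ∃ U : Finset V,
      (Fintype.card V : ℚ) /
          (1 + (∑ i, ((Finset.univ.filter fun j => E i j).card : ℚ)) / (Fintype.card V : ℚ))
        ≤ (U.card : ℚ) ∧
      ∀ v ∈ U, ∀ w ∈ U, E v w →
        ¬ Relation.ReflTransGen (fun a b => a ∈ U ∧ b ∈ U ∧ E a b) w v :=
  stmt_2_general E hirr
end

section
/- Let F_q be a finite field, and let n ≤ q, r ≥ 1, k ≥ 1 be integers with (r+1) | n, r | k and k ≤ nr/(r+1). Let A ⊆ F_q with |A| = n, let 𝒜 = {A_1,...,A_{n/(r+1)}} be a partition of A into blocks of size r+1, and let g ∈ F_q[x] be a polynomial of degree r+1 that is constant on each block A_i. For a = (a_{ij}), 0 ≤ i ≤ r−1, 0 ≤ j ≤ k/r − 1, define the encoding polynomial f_a(x) = ∑_{i=0}^{r−1} ∑_{j=0}^{k/r−1} a_{ij} g(x)^j x^i, and let C = {(f_a(α))_{α∈A} : a ∈ F_q^k}. Then C is a linear code over F_q of dimension k whose minimum Hamming distance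 equals n − k − k/r + 2. -/
open Polynomial

lemma aux_card_le_natDegree {F : Type*} [Field F] [DecidableEq F] {p : F[X]} (hp : p ≠ 0)
    {Z : Finset F} (hZ : ∀ α ∈ Z, p.eval α = 0) : Z.card ≤ p.natDegree := by
  have h1 : Z ⊆ p.roots.toFinset := fun α hα =>
    Multiset.mem_toFinset.2 ((mem_roots hp).2 (hZ α hα))
  calc Z.card ≤ p.roots.toFinset.card := Finset.card_le_card h1
    _ ≤ Multiset.card p.roots := Multiset.toFinset_card_le _
    _ ≤ p.natDegree := card_roots' p

lemma aux_coeff {F : Type*} [Semiring F] {s : ℕ} (b : Fin s → F) (i : Fin s) :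
    (∑ i' : Fin s, C (b i') * X ^ (i' : ℕ)).coeff (i : ℕ) = b i := by
  rw [Polynomial.finset_sum_coeff]
  simp only [coeff_C_mul, coeff_X_pow]
  rw [Finset.sum_eq_single i]
  · simp
  · intro j _ hji
    have : (i : ℕ) ≠ (j : ℕ) := fun h => hji (Fin.ext h.symm)
    simp [this]
  · simp

lemma aux_vanish {F : Type*} [Field F] [DecidableEq F] {s : ℕ} (b : Fin s → F) {Z : Finset F}
    (hsZ : s ≤ Z.card) (hvan : ∀ α ∈ Z, ∑ i : Fin s, b i * α ^ (i : ℕ) = 0) :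
    ∀ i, b i = 0 := by
  rcases Nat.eq_zero_or_pos s with hs | hs
  · intro i; exact absurd i.2 (by omega)
  set p : F[X] := ∑ i : Fin s, C (b i) * X ^ (i : ℕ) with hpdef
  have hev : ∀ α : F, p.eval α = ∑ i : Fin s, b i * α ^ (i : ℕ) := by
    intro α; simp [hpdef, eval_finset_sum]
  have hdeg : p.natDegree ≤ s - 1 := by
    apply natDegree_sum_le_of_forall_le
    intro i _
    refine le_trans (natDegree_C_mul_le _ _) ?_
    rw [natDegree_X_pow]
    omega
  have hp0 : p = 0 := by
    by_contra hp
    have := aux_card_le_natDegree hp (fun α hα => by rw [hev]; exact hvan α hα)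
    omega
  intro i
  have := aux_coeff b i
  rw [← hpdef, hp0] at this
  simpa using this.symm

lemma aux_attach_card {γ : Type*} [DecidableEq γ] (A : Finset γ) (p : γ → Prop) [DecidablePred p] :
    ((Finset.univ : Finset {x // x ∈ A}).filter (fun a : {x // x ∈ A} => p ↑a)).card = (A.filter p).card := by
  rw [Finset.univ_eq_attach, Finset.filter_attach]
  simp


/-- The Tamo–Barg construction: with `(r+1) ∣ n`, `r ∣ k`, `k(r+1) ≤ nr`, `n ≤ q`,
an evaluation set `A ⊆ F_q` of size `n` partitioned into blocks `B i` of size `r+1`,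
and a good polynomial `g` of degree `r+1` constant on each block, the code
`C = {(f_a(α))_{α ∈ A} : a ∈ F_q^k}` with
`f_a(x) = ∑_{i<r} (∑_{j<k/r} a_{ij} g(x)^j) x^i`
is a linear code of dimension `k` whose minimum Hamming distance equals `n - k - k/r + 2`. -/
theorem stmt_3 {F : Type*} [Field F] [Fintype F] [DecidableEq F]
    (n k r : ℕ) (hr : 1 ≤ r) (hk : 1 ≤ k)
    (hn : n ≤ Fintype.card F) (hrn : (r + 1) ∣ n) (hrk : r ∣ k)
    (hkn : k * (r + 1) ≤ n * r)
    (A : Finset F) (hA : A.card = n)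
    (B : Fin (n / (r + 1)) → Finset F)
    (hBcard : ∀ i, (B i).card = r + 1)
    (hBdisj : ∀ i j, i ≠ j → Disjoint (B i) (B j))
    (hBunion : Finset.univ.biUnion B = A)
    (g : F[X]) (hg : g.natDegree = r + 1)
    (hgconst : ∀ i, ∀ α ∈ B i, ∀ β ∈ B i, g.eval α = g.eval β)
    (f : (Fin r → Fin (k / r) → F) → F[X])
    (hf : ∀ a, f a =
      ∑ i : Fin r, (∑ j : Fin (k / r), Polynomial.C (a i j) * g ^ (j : ℕ)) * X ^ (i : ℕ))
    (C : Set (↥A → F))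
    (hC : C = {c | ∃ a, c = fun α : ↥A => (f a).eval (α : F)}) :
    (∃ W : Submodule F (↥A → F), (W : Set (↥A → F)) = C ∧ Module.finrank F W = k) ∧
    IsLeast {d : ℕ | ∃ x ∈ C, ∃ y ∈ C, x ≠ y ∧ hammingDist x y = d}
      (n - k - k / r + 2) := by
  classical
  -- arithmetic setup
  have hrpos : 0 < r := hr
  have hkr : r ≤ k := Nat.le_of_dvd hk hrk
  have hkm : k = (k / r) * r := (Nat.div_mul_cancel hrk).symm
  have hm1 : 1 ≤ k / r := (Nat.one_le_div_iff hrpos).mpr hkr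
  have hnN : n = (n / (r + 1)) * (r + 1) := (Nat.div_mul_cancel hrn).symm
  revert B f C
  generalize hmdef : k / r = m
  generalize hNdef : n / (r + 1) = N
  rw [hmdef] at hkm hm1
  rw [hNdef] at hnN
  intro B hBcard hBdisj hBunion hgconst f hf C hC
  rw [hkm] at hkn
  have hmrn : m * (r + 1) ≤ n := by
    have h2 : (m * (r + 1)) * r ≤ n * r := by
      calc (m * (r + 1)) * r = (m * r) * (r + 1) := by ring
        _ ≤ n * r := hkn
    exact Nat.le_of_mul_le_mul_right h2 hrpos
  have hmN : m ≤ N := by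
    have h2 : m * (r + 1) ≤ N * (r + 1) := by rw [← hnN]; exact hmrn
    exact Nat.le_of_mul_le_mul_right h2 (by omega)
  set D := (m - 1) * (r + 1) + (r - 1) with hDdef
  have hD2 : D + 2 = k + m := by
    have hm' : m - 1 + 1 = m := by omega
    calc D + 2 = (m - 1) * (r + 1) + (r + 1) := by omega
      _ = (m - 1 + 1) * (r + 1) := by ring
      _ = m * (r + 1) := by rw [hm']
      _ = k + m := by rw [hkm]; ring
  have hDn : D + 2 ≤ n := by
    rw [hD2]
    calc k + m = m * (r + 1) := by rw [hkm]; ring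
      _ ≤ n := hmrn
  -- blocks
  have hBsubA : ∀ t, B t ⊆ A := fun t => by
    rw [← hBunion]; exact Finset.subset_biUnion_of_mem B (Finset.mem_univ t)
  have hBne : ∀ t, (B t).Nonempty := fun t => Finset.card_pos.mp (by rw [hBcard]; omega)
  choose ρ ρmem using hBne
  set c : Fin N → F := fun t => g.eval (ρ t) with hcdef
  have hgval : ∀ t, ∀ α ∈ B t, g.eval α = c t := fun t α hα => hgconst t α hα (ρ t) (ρmem t)
  have hcinj : Function.Injective c := by
    intro t t' hcc
    by_contra hne
    have hdisj := hBdisj t t' hne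
    set p := g - Polynomial.C (c t) with hpdef
    have hpne : p ≠ 0 := by
      intro h
      have hgc : g = Polynomial.C (c t) := by rwa [sub_eq_zero] at h
      have h2 : g.natDegree = 0 := by rw [hgc]; exact natDegree_C _
      omega
    have hpdeg : p.natDegree = r + 1 := by rw [hpdef, natDegree_sub_C, hg]
    have hunion : (B t ∪ B t').card = 2 * (r + 1) := by
      rw [Finset.card_union_of_disjoint hdisj, hBcard, hBcard]; ring
    have hsub := aux_card_le_natDegree hpne (Z := B t ∪ B t') ?_
    · rw [hunion, hpdeg] at hsub; omega
    · intro α hα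
      rcases Finset.mem_union.mp hα with h | h
      · simp [hpdef, hgval t α h]
      · simp [hpdef, hgval t' α h, ← hcc]
  -- eval formula
  have heval : ∀ a (x : F), (f a).eval x
      = ∑ i : Fin r, (∑ j : Fin m, a i j * (g.eval x) ^ (j : ℕ)) * x ^ (i : ℕ) := by
    intro a x
    rw [hf]
    simp [eval_finset_sum]
  -- the linear map
  let L : (Fin r → Fin m → F) →ₗ[F] (↥A → F) :=
    { toFun := fun a => fun α : ↥A => (f a).eval (α : F)
      map_add' := by
        intro a b
        funext α
        show (f (a + b)).eval ↑α = (f a).eval ↑α + (f b).eval ↑α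
        simp only [heval, Pi.add_apply]
        rw [← Finset.sum_add_distrib]
        refine Finset.sum_congr rfl fun i _ => ?_
        rw [← add_mul, ← Finset.sum_add_distrib]
        congr 1
        refine Finset.sum_congr rfl fun j _ => ?_
        ring
      map_smul' := by
        intro s a
        funext α
        show (f (s • a)).eval ↑α = s * (f a).eval ↑α
        simp only [heval, Pi.smul_apply, smul_eq_mul]
        rw [Finset.mul_sum]
        refine Finset.sum_congr rfl fun i _ => ?_
        rw [← mul_assoc]
        congr 1
        rw [Finset.mul_sum]
        refine Finset.sum_congr rfl fun j _ => ?_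
        ring }
  have hLapp : ∀ a (α : ↥A), L a α = (f a).eval (α : F) := fun _ _ => rfl
  -- degree bound
  have hdeg : ∀ a, (f a).natDegree ≤ D := by
    intro a
    rw [hf]
    apply natDegree_sum_le_of_forall_le
    intro i _
    refine le_trans (natDegree_mul_le) ?_
    have h1 : (∑ j : Fin m, Polynomial.C (a i j) * g ^ (j : ℕ)).natDegree ≤ (m - 1) * (r + 1) := by
      apply natDegree_sum_le_of_forall_le
      intro j _
      refine le_trans (natDegree_C_mul_le _ _) ?_
      refine le_trans (natDegree_pow_le) ?_
      rw [hg]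
      have : (j : ℕ) ≤ m - 1 := by omega
      exact Nat.mul_le_mul_right _ this
    have h2 : (X ^ (i : ℕ) : F[X]).natDegree ≤ r - 1 := by
      rw [natDegree_X_pow]; omega
    omega
  -- injectivity
  have hLinj : Function.Injective L := by
    rw [injective_iff_map_eq_zero]
    intro a ha
    have hev0 : ∀ α ∈ A, (f a).eval α = 0 := fun α hα => congrFun ha ⟨α, hα⟩
    have hstep : ∀ t : Fin N, ∀ i : Fin r, ∑ j : Fin m, a i j * (c t) ^ (j : ℕ) = 0 := by
      intro t
      apply aux_vanish (b := fun i : Fin r => ∑ j : Fin m, a i j * (c t) ^ (j : ℕ))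
        (Z := B t) (by rw [hBcard]; omega)
      intro α hα
      have h0 := hev0 α (hBsubA t hα)
      rw [heval] at h0
      rw [← hgval t α hα]
      exact h0
    funext i j
    have hcard : (Finset.univ.image c).card = N := by
      rw [Finset.card_image_of_injective _ hcinj, Finset.card_univ, Fintype.card_fin]
    have := aux_vanish (b := fun j : Fin m => a i j) (Z := Finset.univ.image c)
      (by rw [hcard]; omega) ?_ j
    · simpa using this
    · intro α hα
      obtain ⟨t, _, rfl⟩ := Finset.mem_image.mp hα
      exact hstep t i
  constructor
  · -- submodule
    refine ⟨LinearMap.range L, ?_, ?_⟩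
    · rw [hC]
      ext x
      simp only [SetLike.mem_coe, LinearMap.mem_range, Set.mem_setOf_eq]
      constructor
      · rintro ⟨a, ha⟩; exact ⟨a, ha.symm⟩
      · rintro ⟨a, ha⟩; exact ⟨a, ha.symm⟩
    · rw [LinearMap.finrank_range_of_inj hLinj]
      have : Module.finrank F (Fin r → Fin m → F) = r * m := by
        simp [Module.finrank_pi_fintype]
      rw [this, hkm, mul_comm]
  constructor
  · -- membership : construction of a minimum weight codeword
    have einj : Function.Injective (Fin.castLE hmN) := Fin.castLE_injective hmN
    set e : Fin m → Fin N := Fin.castLE hmN with hedef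
    set jstar : Fin m := ⟨m - 1, by omega⟩ with hjdef
    set S : Finset (Fin m) := Finset.univ.erase jstar with hSdef
    have hScard : S.card = m - 1 := by
      rw [hSdef, Finset.card_erase_of_mem (Finset.mem_univ _), Finset.card_univ,
        Fintype.card_fin]
    obtain ⟨Q, hQsub, hQcard⟩ := Finset.exists_subset_card_eq
      (s := B (e jstar)) (n := r - 1) (by rw [hBcard]; omega)
    set P : F[X] := ∏ β ∈ Q, (X - Polynomial.C β) with hPdef
    set R : F[X] := ∏ j ∈ S, (X - Polynomial.C (c (e j))) with hRdef
    have hPdeg : P.natDegree = r - 1 := by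
      rw [hPdef, natDegree_prod _ _ (fun β _ => X_sub_C_ne_zero β)]
      simp [natDegree_X_sub_C, hQcard]
    have hRdeg : R.natDegree = m - 1 := by
      rw [hRdef, natDegree_prod _ _ (fun j _ => X_sub_C_ne_zero _)]
      simp [natDegree_X_sub_C, hScard]
    set w : F := ∏ j ∈ S, (c (e jstar) - c (e j)) with hwdef
    have hwne : w ≠ 0 := by
      rw [hwdef]
      apply Finset.prod_ne_zero_iff.mpr
      intro j hj
      refine sub_ne_zero.mpr fun h => ?_
      exact (Finset.ne_of_mem_erase hj) (einj (hcinj h)).symm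
    set a₀ : Fin r → Fin m → F := fun i j => w⁻¹ * P.coeff i * R.coeff j with ha₀
    have hveq : ∀ x : F, (f a₀).eval x = w⁻¹ * R.eval (g.eval x) * P.eval x := by
      intro x
      rw [heval]
      have hRy : ∀ y : F, ∑ j : Fin m, R.coeff j * y ^ (j : ℕ) = R.eval y := by
        intro y
        rw [Fin.sum_univ_eq_sum_range (fun j => R.coeff j * y ^ j) m]
        rw [eval_eq_sum_range' (by omega : R.natDegree < m)]
      have hPx : ∑ i : Fin r, P.coeff i * x ^ (i : ℕ) = P.eval x := by
        rw [Fin.sum_univ_eq_sum_range (fun i => P.coeff i * x ^ i) r]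
        rw [eval_eq_sum_range' (by omega : P.natDegree < r)]
      calc ∑ i : Fin r, (∑ j : Fin m, a₀ i j * (g.eval x) ^ (j : ℕ)) * x ^ (i : ℕ)
          = ∑ i : Fin r, (w⁻¹ * R.eval (g.eval x)) * (P.coeff i * x ^ (i : ℕ)) := by
            refine Finset.sum_congr rfl fun i _ => ?_
            have hinner : ∑ j : Fin m, a₀ i j * (g.eval x) ^ (j : ℕ)
                = (w⁻¹ * P.coeff i) * ∑ j : Fin m, R.coeff j * (g.eval x) ^ (j : ℕ) := by
              rw [Finset.mul_sum]
              exact Finset.sum_congr rfl fun j _ => by rw [ha₀]; ring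
            rw [hinner, hRy]
            ring
          _ = (w⁻¹ * R.eval (g.eval x)) * ∑ i : Fin r, P.coeff i * x ^ (i : ℕ) := by
            rw [Finset.mul_sum]
          _ = w⁻¹ * R.eval (g.eval x) * P.eval x := by rw [hPx]
    set Z : Finset F := S.biUnion (fun j => B (e j)) ∪ Q with hZdef
    have hZA : Z ⊆ A := by
      rw [hZdef]
      apply Finset.union_subset
      · intro α hα
        obtain ⟨j, _, hj⟩ := Finset.mem_biUnion.mp hα
        exact hBsubA _ hj
      · exact hQsub.trans (hBsubA _)
    have hdisjZ : Disjoint (S.biUnion (fun j => B (e j))) Q := by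
      rw [Finset.disjoint_biUnion_left]
      intro j hj
      refine Finset.disjoint_of_subset_right hQsub (hBdisj _ _ fun h => ?_)
      exact (Finset.ne_of_mem_erase hj) (einj h)
    have hbcard : (S.biUnion fun j => B (e j)).card = (m - 1) * (r + 1) := by
      rw [Finset.card_biUnion (fun j _ j' _ hne => hBdisj _ _ (fun h => hne (einj h)))]
      simp [hBcard, hScard]
    have hZcard : Z.card = D := by
      rw [hZdef, Finset.card_union_of_disjoint hdisjZ, hbcard, hQcard]
    have hvZ : ∀ α ∈ Z, (f a₀).eval α = 0 := by
      intro α hα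
      rw [hveq]
      rcases Finset.mem_union.mp hα with h | h
      · obtain ⟨j, hjS, hjB⟩ := Finset.mem_biUnion.mp h
        have hz : R.eval (g.eval α) = 0 := by
          rw [hgval _ α hjB, hRdef, eval_prod]
          apply Finset.prod_eq_zero hjS
          simp
        rw [hz]; ring
      · have hz : P.eval α = 0 := by
          rw [hPdef, eval_prod]
          apply Finset.prod_eq_zero h
          simp
        rw [hz]; ring
    have hvnz : ∀ α ∈ A, α ∉ Z → (f a₀).eval α ≠ 0 := by
      intro α hαA hαZ
      rw [hveq]
      have hαB : α ∈ Finset.univ.biUnion B := by rw [hBunion]; exact hαA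
      obtain ⟨t, _, htB⟩ := Finset.mem_biUnion.mp hαB
      have hPne : P.eval α ≠ 0 := by
        rw [hPdef, eval_prod]
        simp only [eval_sub, eval_X, eval_C]
        apply Finset.prod_ne_zero_iff.mpr
        intro β hβ
        refine sub_ne_zero.mpr fun h => ?_
        exact hαZ (by rw [hZdef]; exact Finset.mem_union_right _ (h ▸ hβ))
      have hRne : R.eval (g.eval α) ≠ 0 := by
        rw [hgval t α htB, hRdef, eval_prod]
        simp only [eval_sub, eval_X, eval_C]
        apply Finset.prod_ne_zero_iff.mpr
        intro j hjS
        refine sub_ne_zero.mpr fun h => ?_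
        have ht : t = e j := hcinj h
        apply hαZ
        rw [hZdef]
        exact Finset.mem_union_left _ (Finset.mem_biUnion.mpr ⟨j, hjS, ht ▸ htB⟩)
      exact mul_ne_zero (mul_ne_zero (inv_ne_zero hwne) hRne) hPne
    have h0C : (0 : ↥A → F) ∈ C := by
      rw [hC]
      refine ⟨0, ?_⟩
      funext α
      simp [hf]
    have hx₀C : (fun α : ↥A => (f a₀).eval (α : F)) ∈ C := by rw [hC]; exact ⟨a₀, rfl⟩
    obtain ⟨α₀, hα₀A, hα₀Z⟩ : ∃ α ∈ A, α ∉ Z := by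
      by_contra h
      push_neg at h
      have hsub : A ⊆ Z := h
      have := Finset.card_le_card hsub
      omega
    have hxne : (fun α : ↥A => (f a₀).eval (α : F)) ≠ (0 : ↥A → F) := by
      intro h
      exact hvnz α₀ hα₀A hα₀Z (congrFun h ⟨α₀, hα₀A⟩)
    refine ⟨_, hx₀C, 0, h0C, hxne, ?_⟩
    have hfz : A.filter (fun α => (f a₀).eval α = 0) = Z := by
      ext α
      simp only [Finset.mem_filter]
      constructor
      · rintro ⟨hαA, hα0⟩
        by_contra hz
        exact hvnz α hαA hz hα0
      · intro hz
        exact ⟨hZA hz, hvZ α hz⟩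
    have hsplit := Finset.card_filter_add_card_filter_not
      (s := A) (p := fun α => (f a₀).eval α = 0)
    have hdist : hammingDist (fun α : ↥A => (f a₀).eval (α : F)) (0 : ↥A → F)
        = (A.filter (fun α => ¬ (f a₀).eval α = 0)).card := by
      rw [← aux_attach_card A (fun α => ¬ (f a₀).eval α = 0)]
      unfold hammingDist
      congr 1
    rw [hdist]
    rw [hfz] at hsplit
    omega
  · -- lower bound
    rintro d ⟨x, hx, y, hy, hxy, rfl⟩
    rw [hC] at hx hy
    obtain ⟨a, rfl⟩ := hx
    obtain ⟨a', rfl⟩ := hy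
    have hbfun : (fun α : ↥A => (f (a - a')).eval (α : F))
        = fun α : ↥A => (f a).eval (α : F) - (f a').eval (α : F) := by
      have := map_sub L a a'
      funext α
      calc (f (a - a')).eval (α : F) = L (a - a') α := rfl
        _ = (L a - L a') α := by rw [this]
        _ = (f a).eval (α : F) - (f a').eval (α : F) := rfl
    have hfbne : f (a - a') ≠ 0 := by
      intro h
      apply hxy
      funext α
      have h2 := congrFun hbfun α
      rw [h] at h2
      simp only [eval_zero] at h2
      exact sub_eq_zero.mp h2.symm
    have hzle : (A.filter (fun α => (f (a - a')).eval α = 0)).card ≤ D :=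
      le_trans (aux_card_le_natDegree hfbne (fun α hα => (Finset.mem_filter.mp hα).2)) (hdeg _)
    have hsplit := Finset.card_filter_add_card_filter_not
      (s := A) (p := fun α => (f (a - a')).eval α = 0)
    have hdist : hammingDist (fun α : ↥A => (f a).eval (α : F))
        (fun α : ↥A => (f a').eval (α : F))
        = (A.filter (fun α => ¬ (f (a - a')).eval α = 0)).card := by
      rw [← aux_attach_card A (fun α => ¬ (f (a - a')).eval α = 0)]
      unfold hammingDist
      congr 1
      ext α
      simp only [Finset.mem_filter, ne_eq, congrFun hbfun α, sub_eq_zero]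
    rw [hdist]
    omega
end

section
/- Let F_q be a finite field, and let n ≤ q, r ≥ 1, k ≥ 1 be integers with (r+1) | n and r | k. Let A ⊆ F_q with |A| = n, let 𝒜 = {A_1,...,A_{n/(r+1)}} be a partition of A into blocks of size r+1, and let g ∈ F_q[x] be a polynomial of degree r+1 that is constant on each block A_i. For a = (a_{ij}) define f_a(x) = ∑_{i=0}^{r−1} ∑_{j=0}^{k/r−1} a_{ij} g(x)^j x^i. Then for every a ∈ F_q^k and every block A_j of the partition there exists a polynomial δ ∈ F_q[x] of degree at most r−1 such that δ(β) = f_a(β) for all β ∈ A_j. In particular, for every α ∈ A_j the value f_a(α) is determined by the r values f_a(β), β ∈ A_j\{α}, so the code C = {(f_a(α))_{α∈A} : a ∈ F_q^k} has locality r. -/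
open Polynomial

/-- Local recovery for the Tamo–Barg construction: for every message `a` and every block
`B j` of the partition there is a polynomial `δ` of degree at most `r - 1` agreeing with the
encoding polynomial `f_a` on all of `B j`.  Consequently, for every `α ∈ B j` the value
`f_a(α)` is determined by the `r` values `f_a(β)`, `β ∈ B j \ {α}`, i.e. the code has
locality `r`. -/
theorem stmt_4 {F : Type*} [Field F] [Fintype F] [DecidableEq F]
    (n k r : ℕ) (hr : 1 ≤ r) (hk : 1 ≤ k)
    (hn : n ≤ Fintype.card F) (hrn : (r + 1) ∣ n) (hrk : r ∣ k)
    (A : Finset F) (hA : A.card = n)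
    (B : Fin (n / (r + 1)) → Finset F)
    (hBcard : ∀ i, (B i).card = r + 1)
    (hBdisj : ∀ i j, i ≠ j → Disjoint (B i) (B j))
    (hBunion : Finset.univ.biUnion B = A)
    (g : F[X]) (hg : g.natDegree = r + 1)
    (hgconst : ∀ i, ∀ α ∈ B i, ∀ β ∈ B i, g.eval α = g.eval β)
    (f : (Fin r → Fin (k / r) → F) → F[X])
    (hf : ∀ a, f a =
      ∑ i : Fin r, (∑ j : Fin (k / r), Polynomial.C (a i j) * g ^ (j : ℕ)) * X ^ (i : ℕ)) :
    (∀ a, ∀ j, ∃ δ : F[X], δ.degree < (r : ℕ) ∧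
        ∀ β ∈ B j, δ.eval β = (f a).eval β) ∧
    (∀ a b, ∀ j, ∀ α ∈ B j,
        (∀ β ∈ B j, β ≠ α → (f a).eval β = (f b).eval β) →
        (f a).eval α = (f b).eval α) := by
  have key : ∀ a, ∀ j, ∃ δ : F[X], δ.degree < (r : ℕ) ∧
      ∀ β ∈ B j, δ.eval β = (f a).eval β := by
    intro a j
    have hne : (B j).Nonempty := Finset.card_pos.mp (by rw [hBcard]; omega)
    obtain ⟨β₀, hβ₀⟩ := hne
    set c := g.eval β₀ with hc
    refine ⟨∑ i : Fin r, Polynomial.C (∑ jj : Fin (k / r), a i jj * c ^ (jj : ℕ))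
        * X ^ (i : ℕ), ?_, ?_⟩
    · refine lt_of_le_of_lt (Polynomial.degree_sum_le _ _) ?_
      rw [Finset.sup_lt_iff (by exact_mod_cast WithBot.bot_lt_coe r)]
      intro i _
      refine lt_of_le_of_lt (Polynomial.degree_C_mul_X_pow_le _ _) ?_
      exact_mod_cast i.isLt
    · intro β hβ
      have hcβ : g.eval β = c := hgconst j β hβ β₀ hβ₀
      rw [hf]
      simp [eval_finset_sum, hcβ]
  refine ⟨key, ?_⟩
  intro a b j α hα hagree
  obtain ⟨δa, hda, hea⟩ := key a j
  obtain ⟨δb, hdb, heb⟩ := key b j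
  have hsub : δa = δb := by
    apply Polynomial.eq_of_degree_sub_lt_of_eval_finset_eq ((B j).erase α)
    · rw [Finset.card_erase_of_mem hα, hBcard]
      refine lt_of_le_of_lt (Polynomial.degree_sub_le _ _) ?_
      simp only [Nat.add_sub_cancel]
      exact max_lt hda hdb
    · intro x hx
      rw [hea x (Finset.mem_of_mem_erase hx), heb x (Finset.mem_of_mem_erase hx)]
      exact hagree x (Finset.mem_of_mem_erase hx) (Finset.ne_of_mem_erase hx)
  rw [← hea α hα, ← heb α hα, hsub]
end

section
/- Let p be a prime and let l, s, m be positive integers such that l divides s and p^l ≡ 1 (mod m). Let H be an additive subgroup of F_{p^s} that is closed under multiplication by elements of the subfield F_{p^l}, and let α_1, ..., α_m be the m distinct m-th roots of unity in F_{p^s}. Define g(x) = ∏_{i=1}^m ∏_{h∈H} (x + h + α_i). Then for every b ∈ F_{p^s}, g is constant on the set U = ∪_{i=1}^m (H + b·α_i), i.e., g(u) = g(b') for all u, b' ∈ U; moreover |U| = |H| if b ∈ H and |U| = m·|H| if b ∉ H. -/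
/-!
Write `q = p ^ l`. Since `m ∣ q - 1`, every `m`-th root of unity `ζ` satisfies `ζ ^ q = ζ`, so it
lies in `𝔽_q` and hence `ζ • H = H`. The product `g` is therefore invariant under `x ↦ x + h`
for `h ∈ H` (which permutes `H`) and satisfies `g (ζ x) = ζ ^ (m |H|) g x = g x` (multiplying by
`ζ` permutes both `H` and the roots of unity). Thus `g (h + b α i) = g (α i * b) = g b` on `U`.

For the size of `U`: if `b ∈ H` every coset `H + b α i` is `H`. Otherwise they are pairwise
disjoint, since `h + b α i = h' + b α j` with `i ≠ j` would give `b = (α i - α j)⁻¹ (h' - h) ∈ H`,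
the scalar `(α i - α j)⁻¹` being in `𝔽_q` because Frobenius is additive in characteristic `p`.
-/

open Finset Polynomial

theorem pow_eq_self_of_pow_eq_one_of_modEq {M : Type*} [Monoid M] {c : M} {m q : ℕ}
    (hc : c ^ m = 1) (hq : q ≡ 1 [MOD m]) : c ^ q = c := by
  rw [pow_eq_pow_mod q hc, show q % m = 1 % m from hq, ← pow_eq_pow_mod 1 hc, pow_one]

theorem Finset.prod_comp_of_injective_of_mapsTo {ι M : Type*} [CommMonoid M] [DecidableEq ι]
    {s : Finset ι} {e : ι → ι} (he : Function.Injective e) (hs : ∀ x ∈ s, e x ∈ s)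
    (f : ι → M) : ∏ x ∈ s, f (e x) = ∏ x ∈ s, f x := by
  have himage : s.image e = s :=
    eq_of_subset_of_card_le (image_subset_iff.2 hs) (card_image_of_injective s he).ge
  rw [← prod_image he.injOn, himage]

theorem image_univ_eq_nthRootsFinset {K : Type*} [CommRing K] [IsDomain K] [DecidableEq K]
    {m : ℕ} (hm : 0 < m) {α : Fin m → K} (hinj : Function.Injective α)
    (hroot : ∀ i, α i ^ m = 1) : univ.image α = nthRootsFinset m (1 : K) := by
  refine eq_of_subset_of_card_le (image_subset_iff.2 fun i _ => ?_) ?_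
  · exact (mem_nthRootsFinset hm 1).2 (hroot i)
  · rw [card_image_of_injective _ hinj, card_univ, Fintype.card_fin, nthRootsFinset_def]
    exact (Multiset.toFinset_card_le _).trans (card_nthRoots m 1)

section GoodProd

variable {K : Type*} [CommRing K] [DecidableEq K]

def goodProd (R T : Finset K) (x : K) : K :=
  ∏ a ∈ R, ∏ h ∈ T, (x + h + a)

theorem goodProd_add_left {R T : Finset K} {t : K} (hT : ∀ h ∈ T, t + h ∈ T) (x : K) :
    goodProd R T (t + x) = goodProd R T x := by
  refine prod_congr rfl fun a _ => ?_
  calc ∏ h ∈ T, (t + x + h + a) = ∏ h ∈ T, (x + (t + h) + a) :=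
        prod_congr rfl fun h _ => by ring
    _ = ∏ h ∈ T, (x + h + a) :=
        prod_comp_of_injective_of_mapsTo (add_right_injective t) hT (fun h => x + h + a)

theorem goodProd_mul_left [IsDomain K] {R T : Finset K} {c : K} (hc : c ≠ 0)
    (hR : ∀ a ∈ R, c * a ∈ R) (hT : ∀ h ∈ T, c * h ∈ T) (x : K) :
    goodProd R T (c * x) = c ^ (#R * #T) * goodProd R T x := by
  have hinj : Function.Injective (c * ·) := mul_right_injective₀ hc
  calc goodProd R T (c * x) = ∏ a ∈ R, ∏ h ∈ T, (c * x + c * h + c * a) := by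
        rw [goodProd, ← prod_comp_of_injective_of_mapsTo hinj hR]
        exact prod_congr rfl fun a _ =>
          (prod_comp_of_injective_of_mapsTo hinj hT (fun h => c * x + h + c * a)).symm
    _ = ∏ a ∈ R, ∏ h ∈ T, c * (x + h + a) :=
        prod_congr rfl fun a _ => prod_congr rfl fun h _ => by ring
    _ = c ^ (#R * #T) * goodProd R T x := by
        simp only [goodProd, prod_mul_distrib, prod_const]
        rw [← pow_mul, mul_comm #T]

theorem goodProd_image_add_mul [IsDomain K] {m : ℕ} (hm : 0 < m) {α : Fin m → K} (hinj : Function.Injective α) (hroot : ∀ i, α i ^ m = 1)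
    {T : Finset K} (i : Fin m) {t : K} (hmulT : ∀ h ∈ T, α i * h ∈ T)
    (haddT : ∀ h ∈ T, t + h ∈ T) (b : K) :
    goodProd (univ.image α) T (t + b * α i) = goodProd (univ.image α) T b := by
  have hroots := image_univ_eq_nthRootsFinset hm hinj hroot
  have hαi : α i ∈ nthRootsFinset m (1 : K) := hroots ▸ mem_image_of_mem α (mem_univ i)
  have hmulR : ∀ a ∈ univ.image α, α i * a ∈ univ.image α := by
    rw [hroots]
    exact fun a ha => by simpa using mul_mem_nthRootsFinset hαi ha
  rw [goodProd_add_left haddT, mul_comm,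
    goodProd_mul_left (ne_zero_of_mem_nthRootsFinset one_ne_zero hαi) hmulR hmulT,
    card_image_of_injective _ hinj, card_univ, Fintype.card_fin, pow_mul, hroot, one_pow, one_mul]

end GoodProd

theorem mem_of_add_mul_eq_add_mul {K : Type*} [Field K] {p n : ℕ} [Fact p.Prime] [CharP K p]
    {H : AddSubgroup K} (hH : ∀ c : K, c ^ p ^ n = c → ∀ h ∈ H, c * h ∈ H)
    {a a' b h h' : K} (ha : a ^ p ^ n = a) (ha' : a' ^ p ^ n = a') (hne : a ≠ a')
    (hh : h ∈ H) (hh' : h' ∈ H) (heq : h + b * a = h' + b * a') : b ∈ H := by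
  have hd : (a - a')⁻¹ ^ p ^ n = (a - a')⁻¹ := by rw [inv_pow, sub_pow_char_pow, ha, ha']
  have hbd : b * (a - a') ∈ H := by
    rw [show b * (a - a') = h' - h by linear_combination heq]
    exact H.sub_mem hh' hh
  have hmem := hH _ hd _ hbd
  rwa [mul_comm b, ← mul_assoc, inv_mul_cancel₀ (sub_ne_zero.2 hne), one_mul] at hmem

theorem mem_iff_mem_of_forall_mul_mem {K ι : Type*} [Ring K] [Nonempty ι] {H : AddSubgroup K} {b : K}
    {α : ι → K} (hbα : ∀ i, b * α i ∈ H) {U : Finset K}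
    (hU : ∀ u, u ∈ U ↔ ∃ i, ∃ h ∈ H, u = h + b * α i) (x : K) : x ∈ U ↔ x ∈ H := by
  rw [hU]
  constructor
  · rintro ⟨i, h, hh, rfl⟩
    exact H.add_mem hh (hbα i)
  · intro hx
    obtain ⟨i⟩ := ‹Nonempty ι›
    exact ⟨i, x - b * α i, H.sub_mem hx (hbα i), by abel⟩

theorem card_eq_card_mul_of_injective_cosets {K ι : Type*} [Ring K] [DecidableEq K] [Fintype ι]
    {H : AddSubgroup K} {Hs : Finset K} (hHs : ∀ x, x ∈ Hs ↔ x ∈ H) {b : K} {α : ι → K}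
    (hdisj : ∀ i j, ∀ h ∈ H, ∀ h' ∈ H, h + b * α i = h' + b * α j → i = j) {U : Finset K}
    (hU : ∀ u, u ∈ U ↔ ∃ i, ∃ h ∈ H, u = h + b * α i) :
    #U = Fintype.card ι * #Hs := by
  have hUeq : U = univ.biUnion fun i => Hs.image (· + b * α i) := by
    ext x
    simp only [mem_biUnion, mem_univ, mem_image, true_and, hU, hHs, eq_comm (a := x)]
  have hpairwise : ((univ : Finset ι) : Set ι).PairwiseDisjoint
      fun i => Hs.image (· + b * α i) := by
    intro i _ j _ hij
    refine disjoint_left.2 fun x hxi hxj => hij ?_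
    obtain ⟨h, hh, rfl⟩ := mem_image.1 hxi
    obtain ⟨h', hh', heq⟩ := mem_image.1 hxj
    exact hdisj i j h ((hHs h).1 hh) h' ((hHs h').1 hh') heq.symm
  rw [hUeq, card_biUnion hpairwise]
  simp only [card_image_of_injective _ (add_left_injective _), sum_const, card_univ, smul_eq_mul]

theorem stmt_7_general {F : Type*} [Field F] [Fintype F] [DecidableEq F]
    (p l s m : ℕ) (hp : p.Prime) (hm : 0 < m)
    (hmod : p ^ l ≡ 1 [MOD m])
    (hcard : Fintype.card F = p ^ s)
    (H : AddSubgroup F) (Hs : Finset F) (hHs : ∀ x, x ∈ Hs ↔ x ∈ H)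
    (hclosed : ∀ c : F, c ^ (p ^ l) = c → ∀ h ∈ H, c * h ∈ H)
    (α : Fin m → F) (hαinj : Function.Injective α) (hαroot : ∀ i, (α i) ^ m = 1)
    (b : F) (U : Finset F)
    (hU : ∀ u, u ∈ U ↔ ∃ i : Fin m, ∃ h ∈ H, u = h + b * α i)
    (g : F → F) (hg : ∀ x, g x = ∏ i : Fin m, ∏ h ∈ Hs, (x + h + α i)) :
    (∀ u ∈ U, ∀ v ∈ U, g u = g v) ∧
    (b ∈ H → U.card = Hs.card) ∧
    (b ∉ H → U.card = m * Hs.card) := by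
  have : Fact p.Prime := ⟨hp⟩
  have : CharP F p := charP_of_card_eq_prime_pow hcard
  have : Nonempty (Fin m) := ⟨⟨0, hm⟩⟩
  have hfix (i : Fin m) : α i ^ p ^ l = α i := pow_eq_self_of_pow_eq_one_of_modEq (hαroot i) hmod
  have hg_goodProd (x : F) : g x = goodProd (univ.image α) Hs x := by
    rw [hg, goodProd, prod_image hαinj.injOn]
  have hg_eq (u : F) (hu : u ∈ U) : g u = g b := by
    obtain ⟨i, h, hh, rfl⟩ := (hU u).1 hu
    rw [hg_goodProd, hg_goodProd]
    refine goodProd_image_add_mul hm hαinj hαroot i (fun h' hh' => ?_) (fun h' hh' => ?_) b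
    · simpa only [hHs] using hclosed _ (hfix i) _ ((hHs _).1 hh')
    · simpa only [hHs] using H.add_mem hh ((hHs _).1 hh')
  refine ⟨fun u hu v hv => (hg_eq u hu).trans (hg_eq v hv).symm, fun hb => ?_, fun hb => ?_⟩
  · have hbα (i : Fin m) : b * α i ∈ H := mul_comm (α i) b ▸ hclosed _ (hfix i) _ hb
    exact congrArg card (ext fun x => by rw [hHs, mem_iff_mem_of_forall_mul_mem hbα hU])
  · rw [card_eq_card_mul_of_injective_cosets hHs (fun i j h hh h' hh' heq => ?_) hU,
      Fintype.card_fin]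
    by_contra hij
    exact hb (mem_of_add_mul_eq_add_mul hclosed (hfix i) (hfix j) (hαinj.ne hij) hh hh' heq)

/-- Theorem on good polynomials combining the additive and multiplicative structure:
let `p` be prime, `l ∣ s`, `p^l ≡ 1 (mod m)`, let `H` be an additive subgroup of the field
`F` with `p^s` elements that is closed under multiplication by the subfield `F_{p^l}`
(whose elements are exactly the `c` with `c^(p^l) = c`), and let `α 1, ..., α m` be the `m`
distinct `m`-th roots of unity.  Then `g(x) = ∏_{i=1}^m ∏_{h ∈ H} (x + h + α i)` is constant
on `U = ∪_i (H + b·α i)` for every `b`, and `|U| = |H|` if `b ∈ H` while `|U| = m·|H|`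
if `b ∉ H`. -/
theorem stmt_7 {F : Type*} [Field F] [Fintype F] [DecidableEq F]
    (p l s m : ℕ) (hp : p.Prime) (hl : 0 < l) (hs : 0 < s) (hm : 0 < m)
    (hls : l ∣ s) (hmod : p ^ l ≡ 1 [MOD m])
    (hcard : Fintype.card F = p ^ s)
    (H : AddSubgroup F) (Hs : Finset F) (hHs : ∀ x, x ∈ Hs ↔ x ∈ H)
    (hclosed : ∀ c : F, c ^ (p ^ l) = c → ∀ h ∈ H, c * h ∈ H)
    (α : Fin m → F) (hαinj : Function.Injective α) (hαroot : ∀ i, (α i) ^ m = 1)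
    (b : F) (U : Finset F)
    (hU : ∀ u, u ∈ U ↔ ∃ i : Fin m, ∃ h ∈ H, u = h + b * α i)
    (g : F → F) (hg : ∀ x, g x = ∏ i : Fin m, ∏ h ∈ Hs, (x + h + α i)) :
    (∀ u ∈ U, ∀ v ∈ U, g u = g v) ∧
    (b ∈ H → U.card = Hs.card) ∧
    (b ∉ H → U.card = m * Hs.card) :=
  stmt_7_general p l s m hp hm hmod hcard H Hs hHs hclosed α hαinj hαroot b U hU g hg
end

section
/- Let F_q be the finite field with q elements and let r ≥ 1 with r + 1 ≤ q. Then there exist a polynomial f ∈ F_q[x] of degree r+1 and pairwise disjoint subsets S_1, ..., S_N of F_q, each of size r+1, with N ≥ ⌈C(q, r+1)/q^r⌉, such that f is constant on each S_j (where C(q, r+1) denotes the binomial coefficient). -/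
/-!
For an `(r+1)`-subset `A` of `F_q` let `P_A = ∏_{a ∈ A} (X - a)`, a monic polynomial of degree
`r + 1`. Its coefficients of `X^1, …, X^r` take at most `q^r` values, so by pigeonhole some
`⌈C(q, r+1) / q^r⌉` of these subsets share them. Any two such `P_A, P_B` differ by a constant,
hence `P_A` is constant on `B`; and if `A, B` met, the constant would vanish, forcing `P_A = P_B`
and so `A = B`.
-/

open Polynomial Finset Lagrange

namespace Polynomial

theorem Monic.eq_add_C_of_coeff_eq {R : Type*} [Ring R] {p q : R[X]} (hp : p.Monic)
    (hq : q.Monic) (hdeg : p.natDegree = q.natDegree)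
    (hcoeff : ∀ i, 0 < i → i < p.natDegree → p.coeff i = q.coeff i) :
    p = q + C (p.coeff 0 - q.coeff 0) := by
  ext i
  rcases Nat.eq_zero_or_pos i with rfl | hi
  · simp
  rw [coeff_add, coeff_C_of_ne_zero hi.ne', add_zero]
  rcases lt_trichotomy i p.natDegree with hlt | rfl | hgt
  · exact hcoeff i hi hlt
  · rw [hp.coeff_natDegree, hdeg, hq.coeff_natDegree]
  · rw [coeff_eq_zero_of_natDegree_lt hgt, coeff_eq_zero_of_natDegree_lt (hdeg ▸ hgt)]

end Polynomial

namespace Lagrange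

variable {R : Type*} [CommRing R] {s t : Finset R} {c : R}

theorem eval_nodal_id_of_mem {a : R} (ha : a ∈ s) : (nodal s id).eval a = 0 :=
  eval_nodal_at_node (v := id) ha

theorem eval_nodal_id_of_eq_add_C (h : nodal s id = nodal t id + C c) {b : R} (hb : b ∈ t) :
    (nodal s id).eval b = c := by
  rw [h, eval_add, eval_C, eval_nodal_id_of_mem hb, zero_add]

theorem nodal_id_injective [IsDomain R] : Function.Injective fun s : Finset R => nodal s id := by
  intro s t h
  have hroots := congrArg roots h
  simp only [nodal, id, roots_prod_X_sub_C] at hroots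
  exact Finset.val_injective hroots

theorem disjoint_of_nodal_id_eq_add_C [IsDomain R] (h : nodal s id = nodal t id + C c)
    (hst : s ≠ t) : Disjoint s t := by
  rw [Finset.disjoint_left]
  intro a has hat
  have hc : c = 0 := by
    rw [← eval_nodal_id_of_eq_add_C h hat, eval_nodal_id_of_mem has]
  rw [hc, map_zero, add_zero] at h
  exact hst (nodal_id_injective h)

noncomputable def middleCoeffs (r : ℕ) (s : Finset R) : Fin r → R :=
  fun i => (nodal s id).coeff (i + 1)

theorem nodal_id_eq_add_C_of_middleCoeffs_eq [Nontrivial R] {r : ℕ} (hs : s.card = r + 1)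
    (ht : t.card = r + 1) (hst : middleCoeffs r s = middleCoeffs r t) :
    nodal s id = nodal t id + C ((nodal s id).coeff 0 - (nodal t id).coeff 0) := by
  refine nodal_monic.eq_add_C_of_coeff_eq nodal_monic
    (by rw [natDegree_nodal, natDegree_nodal, hs, ht]) fun i hi hir => ?_
  rw [natDegree_nodal, hs] at hir
  obtain ⟨k, rfl⟩ := Nat.exists_eq_add_of_lt hi
  simpa [middleCoeffs] using congrFun hst ⟨k, by omega⟩

end Lagrange

theorem exists_large_middleCoeffs_fiber {R : Type*} [CommRing R] [Fintype R] (r : ℕ) :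
    ∃ G : Finset (Finset R), (∀ A ∈ G, A.card = r + 1) ∧
      (∀ A ∈ G, ∀ B ∈ G, middleCoeffs r A = middleCoeffs r B) ∧
      ((Fintype.card R).choose (r + 1) : ℚ) / (Fintype.card R : ℚ) ^ r ≤ G.card := by
  classical
  obtain ⟨y, -, hy⟩ := exists_le_card_fiber_of_nsmul_le_card_of_maps_to
    (s := univ.powersetCard (r + 1)) (t := (univ : Finset (Fin r → R)))
    (f := middleCoeffs r) (fun _ _ => mem_univ _) univ_nonempty
    (b := ((Fintype.card R).choose (r + 1) : ℚ) / (Fintype.card R : ℚ) ^ r) (by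
      rw [card_univ, Fintype.card_fun, Fintype.card_fin, card_powersetCard, card_univ, nsmul_eq_mul]
      push_cast
      rw [mul_div_cancel₀ _ (by positivity)])
  refine ⟨_, fun A hA => ?_, fun A hA B hB => ?_, hy⟩
  · exact (mem_powersetCard.mp (mem_filter.mp hA).1).2
  · rw [(mem_filter.mp hA).2, (mem_filter.mp hB).2]

theorem stmt_8_general {F : Type*} [Field F] [Fintype F]
    (q r : ℕ) (hq : Fintype.card F = q) (hrq : r + 1 ≤ q) :
    ∃ (f : Polynomial F) (N : ℕ) (S : Fin N → Finset F),
      f.natDegree = r + 1 ∧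
      (q.choose (r + 1) : ℚ) / (q ^ r : ℚ) ≤ (N : ℚ) ∧
      (∀ j, (S j).card = r + 1) ∧
      (∀ j j', j ≠ j' → Disjoint (S j) (S j')) ∧
      (∀ j, ∀ α ∈ S j, ∀ β ∈ S j, f.eval α = f.eval β) := by
  subst hq
  obtain ⟨G, hcard, hcoeffs, hG⟩ := exists_large_middleCoeffs_fiber (R := F) r
  let S : Fin G.card → Finset F := fun j => G.equivFin.symm j
  have hS : ∀ j, S j ∈ G := fun j => (G.equivFin.symm j).2
  have hsame : ∀ j j', nodal (S j) id = nodal (S j') id + C _ := fun j j' =>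
    nodal_id_eq_add_C_of_middleCoeffs_eq (hcard _ (hS j)) (hcard _ (hS j'))
      (hcoeffs _ (hS j) _ (hS j'))
  have hpos : 0 < G.card := by
    have : (0 : ℚ) < G.card := lt_of_lt_of_le (by have := Nat.choose_pos hrq; positivity) hG
    exact_mod_cast this
  let j₀ : Fin G.card := ⟨0, hpos⟩
  refine ⟨nodal (S j₀) id, G.card, S, ?_, hG, fun j => hcard _ (hS j), fun j j' hjj' => ?_,
    fun j α hα β hβ => ?_⟩
  · rw [natDegree_nodal, hcard _ (hS j₀)]
  · refine disjoint_of_nodal_id_eq_add_C (hsame j j') fun h => hjj' ?_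
    exact G.equivFin.symm.injective (Subtype.ext h)
  · rw [eval_nodal_id_of_eq_add_C (hsame j₀ j) hα, eval_nodal_id_of_eq_add_C (hsame j₀ j) hβ]

/-- Existence of good polynomials by counting: over the field with `q` elements, for
`1 ≤ r` with `r + 1 ≤ q`, there exist a polynomial `f` of degree `r + 1` and at least
`⌈C(q, r+1) / q^r⌉` pairwise disjoint subsets of `F_q`, each of size `r + 1`, on each of
which `f` is constant. -/
theorem stmt_8 {F : Type*} [Field F] [Fintype F] [DecidableEq F]
    (q r : ℕ) (hq : Fintype.card F = q) (hr : 1 ≤ r) (hrq : r + 1 ≤ q) :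
    ∃ (f : Polynomial F) (N : ℕ) (S : Fin N → Finset F),
      f.natDegree = r + 1 ∧
      (q.choose (r + 1) : ℚ) / (q ^ r : ℚ) ≤ (N : ℚ) ∧
      (∀ j, (S j).card = r + 1) ∧
      (∀ j j', j ≠ j' → Disjoint (S j) (S j')) ∧
      (∀ j, ∀ α ∈ S j, ∀ β ∈ S j, f.eval α = f.eval β) :=
  stmt_8_general q r hq hrq
end

section
/- Let F be a field, A ⊆ F a finite set, 𝒜 = {A_1,...,A_m} a partition of A, and h(x) = ∏_{a∈A}(x−a). Let α_1,...,α_m be distinct nonzero elements of F and let g be the polynomial of degree < |A| satisfying g(α) = α_i for all α ∈ A_i, i = 1,...,m. Then the m polynomials g^j mod h, j = 0, 1, ..., m−1, form a basis of F_𝒜[x]. -/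
/-!
Reducing modulo `h` does not change values on `A`, so `g ^ j % h` takes the value `α_i ^ j` on
`A_i`. A combination `∑ t_j (g ^ j % h)` therefore takes the value `p(α_i)` on `A_i`, where
`p = ∑ t_j X ^ j`. Linear independence is the invertibility of the Vandermonde matrix of the
distinct `α_i`. For spanning, take `p` to be the Lagrange interpolant of the values of `f` at the
nodes `α_i`: then `f` and `∑ p_j (g ^ j % h)` agree on `A` and both have degree `< |A|`.
-/

open Polynomial Finset Function

section Remainder

variable {F : Type*} [Field F]

theorem degree_mod_prod_X_sub_C_lt (A : Finset F) (p : F[X]) :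
    (p % ∏ a ∈ A, (X - C a)).degree < #A := by
  rw [← modByMonic_eq_mod _ (monic_prod_X_sub_C _ _), ← Lagrange.degree_nodal (v := id)]
  exact degree_modByMonic_lt _ Lagrange.nodal_monic

theorem eval_mod_prod_X_sub_C {A : Finset F} (p : F[X]) {a : F} (ha : a ∈ A) :
    (p % ∏ a ∈ A, (X - C a)).eval a = p.eval a := by
  rw [← modByMonic_eq_mod _ (monic_prod_X_sub_C _ _)]
  exact eval₂_modByMonic_eq_self_of_root (Lagrange.eval_nodal_at_node (v := id) ha)

end Remainder

section PowerValues

variable {F : Type*} [Field F] {m : ℕ} {G : Fin m → F[X]}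

theorem eval_sum_smul_of_eval_eq_pow {α γ : F} (hG : ∀ j, (G j).eval α = γ ^ (j : ℕ))
    (t : Fin m → F) : (∑ j, t j • G j).eval α = ∑ j, t j * γ ^ (j : ℕ) := by
  simp only [eval_finsetSum, eval_smul, hG, smul_eq_mul]

theorem eval_sum_coeff_smul_of_eval_eq_pow {α γ : F} (hG : ∀ j, (G j).eval α = γ ^ (j : ℕ))
    {p : F[X]} (hp : p.degree < m) : (∑ j : Fin m, p.coeff j • G j).eval α = p.eval γ := by
  rw [eval_sum_smul_of_eval_eq_pow hG, eval_eq_sum]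
  exact sum_fin (fun e a => a * γ ^ e) (fun _ => zero_mul _) hp

theorem linearIndependent_of_eval_eq_pow {c x : Fin m → F} (hc : Injective c)
    (hG : ∀ i j, (G j).eval (x i) = c i ^ (j : ℕ)) : LinearIndependent F G := by
  rw [Fintype.linearIndependent_iff]
  intro t ht
  refine congrFun (Matrix.eq_zero_of_forall_index_sum_mul_pow_eq_zero hc fun i => ?_)
  rw [← eval_sum_smul_of_eval_eq_pow (hG i) t, ht, eval_zero]

theorem mem_span_of_eval_eq_pow [DecidableEq F] {A : Finset F} {B : Fin m → Finset F}
    (hBunion : univ.biUnion B = A) {c : Fin m → F} (hc : Injective c)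
    (hGdeg : ∀ j, (G j).degree < #A) (hG : ∀ j i, ∀ α ∈ B i, (G j).eval α = c i ^ (j : ℕ))
    {x : Fin m → F} {f : F[X]} (hfdeg : f.degree < #A)
    (hf : ∀ i, ∀ α ∈ B i, f.eval α = f.eval (x i)) :
    f ∈ Submodule.span F (Set.range G) := by
  set p := Lagrange.interpolate univ c (fun i => f.eval (x i))
  have hinj : Set.InjOn c (univ : Finset (Fin m)) := hc.injOn
  have hp : p.degree < m := by
    simpa only [card_univ, Fintype.card_fin] using Lagrange.degree_interpolate_lt _ hinj
  have hsum_deg : (∑ j : Fin m, p.coeff j • G j) ∈ degreeLT F #A :=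
    Submodule.sum_mem _ fun j _ => Submodule.smul_mem _ _ (mem_degreeLT.2 (hGdeg j))
  have hfeq : f = ∑ j : Fin m, p.coeff j • G j := by
    refine eq_of_degrees_lt_of_eval_finset_eq A hfdeg (mem_degreeLT.1 hsum_deg) fun a ha => ?_
    obtain ⟨i, -, hai⟩ := mem_biUnion.1 (hBunion ▸ ha)
    rw [eval_sum_coeff_smul_of_eval_eq_pow (fun j => hG j i a hai) hp, hf i a hai,
      Lagrange.eval_interpolate_at_node _ hinj (mem_univ i)]
  rw [hfeq]
  exact Submodule.sum_mem _ fun j _ => Submodule.smul_mem _ _ (Submodule.subset_span ⟨j, rfl⟩)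

end PowerValues

theorem stmt_11_general {F : Type*} [Field F] [DecidableEq F]
    (A : Finset F) (m : ℕ) (B : Fin m → Finset F)
    (hBne : ∀ i, (B i).Nonempty)
    (hBunion : Finset.univ.biUnion B = A)
    (h : Polynomial F) (hh : h = ∏ a ∈ A, (Polynomial.X - Polynomial.C a))
    (c : Fin m → F) (hcinj : Function.Injective c)
    (g : Polynomial F)
    (hgval : ∀ i, ∀ α ∈ B i, g.eval α = c i)
    (S : Set (Polynomial F))
    (hS : S = {f | f.degree < (A.card : WithBot ℕ) ∧
      ∀ i, ∀ α ∈ B i, ∀ β ∈ B i, f.eval α = f.eval β})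
    (G : Fin m → Polynomial F) (hG : ∀ j, G j = (g ^ (j : ℕ)) % h) :
    LinearIndependent F G ∧
    (∀ j, G j ∈ S) ∧
    (∀ f ∈ S, f ∈ Submodule.span F (Set.range G)) := by
  subst hh hS
  have hBA : ∀ i, B i ⊆ A := fun i => hBunion ▸ subset_biUnion_of_mem B (mem_univ i)
  have hGdeg : ∀ j, (G j).degree < #A := fun j => hG j ▸ degree_mod_prod_X_sub_C_lt A _
  have hGeval : ∀ j i, ∀ α ∈ B i, (G j).eval α = c i ^ (j : ℕ) := fun j i α hα => by
    rw [hG, eval_mod_prod_X_sub_C _ (hBA i hα), eval_pow, hgval i α hα]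
  choose x hx using hBne
  exact ⟨linearIndependent_of_eval_eq_pow hcinj fun i j => hGeval j i _ (hx i),
    fun j => ⟨hGdeg j, fun i α hα β hβ => by rw [hGeval j i α hα, hGeval j i β hβ]⟩,
    fun f ⟨hfdeg, hf⟩ => mem_span_of_eval_eq_pow hBunion hcinj hGdeg hGeval hfdeg
      fun i α hα => hf i α hα (x i) (hx i)⟩

/-- Let `h(x) = ∏_{a ∈ A}(x - a)`, let `α_1, ..., α_m` (here `c i`) be distinct nonzero field
elements and `g` the polynomial of degree `< |A|` with `g ≡ c i` on the block `A_i` of the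
partition.  Then the polynomials `g^j mod h`, `j = 0, ..., m-1`, form a basis of `F_𝒜[x]`. -/
theorem stmt_11 {F : Type*} [Field F] [DecidableEq F]
    (A : Finset F) (m : ℕ) (B : Fin m → Finset F)
    (hBne : ∀ i, (B i).Nonempty)
    (hBdisj : ∀ i j, i ≠ j → Disjoint (B i) (B j))
    (hBunion : Finset.univ.biUnion B = A)
    (h : Polynomial F) (hh : h = ∏ a ∈ A, (Polynomial.X - Polynomial.C a))
    (c : Fin m → F) (hcnz : ∀ i, c i ≠ 0) (hcinj : Function.Injective c)
    (g : Polynomial F) (hgdeg : g.degree < (A.card : WithBot ℕ))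
    (hgval : ∀ i, ∀ α ∈ B i, g.eval α = c i)
    (S : Set (Polynomial F))
    (hS : S = {f | f.degree < (A.card : WithBot ℕ) ∧
      ∀ i, ∀ α ∈ B i, ∀ β ∈ B i, f.eval α = f.eval β})
    (G : Fin m → Polynomial F) (hG : ∀ j, G j = (g ^ (j : ℕ)) % h) :
    LinearIndependent F G ∧
    (∀ j, G j ∈ S) ∧
    (∀ f ∈ S, f ∈ Submodule.span F (Set.range G)) :=
  stmt_11_general A m B hBne hBunion h hh c hcinj g hgval S hS G hG
end

section
/- Let F be a field, A ⊆ F a finite set of size m(r+1), and 𝒜 = {A_1,...,A_m} a partition of A into m blocks, each of size r+1. Suppose there exists a polynomial g ∈ F_𝒜[x] of degree exactly r+1. Then the polynomials 1, g, g^2, ..., g^{m−1} form a basis of F_𝒜[x], and every nonzero polynomial in F_𝒜[x] has degree equal to i(r+1) for some i ∈ {0, 1, ..., m−1}. -/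
open Polynomial

/-- If `A` has size `m(r+1)`, the partition `𝒜` consists of `m` blocks of size `r+1`, and
there exists `g ∈ F_𝒜[x]` of degree exactly `r+1`, then `1, g, ..., g^{m-1}` form a basis of
`F_𝒜[x]`, and every nonzero polynomial of `F_𝒜[x]` has degree `i(r+1)` for some
`i ∈ {0, ..., m-1}`. -/
theorem stmt_12 {F : Type*} [Field F] [DecidableEq F]
    (A : Finset F) (m r : ℕ) (B : Fin m → Finset F)
    (hA : A.card = m * (r + 1))
    (hBcard : ∀ i, (B i).card = r + 1)
    (hBdisj : ∀ i j, i ≠ j → Disjoint (B i) (B j))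
    (hBunion : Finset.univ.biUnion B = A)
    (S : Set (Polynomial F))
    (hS : S = {f | f.degree < (A.card : WithBot ℕ) ∧
      ∀ i, ∀ α ∈ B i, ∀ β ∈ B i, f.eval α = f.eval β})
    (g : Polynomial F) (hgS : g ∈ S) (hgdeg : g.natDegree = r + 1) :
    LinearIndependent F (fun j : Fin m => g ^ (j : ℕ)) ∧
    (∀ j : Fin m, g ^ (j : ℕ) ∈ S) ∧
    (∀ f ∈ S, f ∈ Submodule.span F (Set.range fun j : Fin m => g ^ (j : ℕ))) ∧
    (∀ f ∈ S, f ≠ 0 → ∃ i < m, f.natDegree = i * (r + 1)) := by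
  classical
  subst hS
  have hg0 : g ≠ 0 := fun h => by simp [h] at hgdeg
  have hgd : g.degree = ((r + 1 : ℕ) : WithBot ℕ) := by
    rw [degree_eq_natDegree hg0, hgdeg]
  have hm : r + 1 < m * (r + 1) := by
    have := hgS.1
    rw [hgd, hA] at this
    exact_mod_cast this
  have hm1 : 0 < m := Nat.pos_of_ne_zero fun h => by simp [h] at hm
  have hpowdeg : ∀ j : ℕ, (g ^ j).natDegree = j * (r + 1) := fun j => by
    rw [natDegree_pow, hgdeg]
  have hpowd : ∀ j : ℕ, (g ^ j).degree = ((j * (r + 1) : ℕ) : WithBot ℕ) := fun j => by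
    rw [degree_eq_natDegree (pow_ne_zero _ hg0), hpowdeg]
  -- membership of powers
  have hmemS : ∀ j : Fin m, g ^ (j : ℕ) ∈
      {f : F[X] | f.degree < (A.card : WithBot ℕ) ∧
        ∀ i, ∀ α ∈ B i, ∀ β ∈ B i, f.eval α = f.eval β} := by
    intro j
    constructor
    · rw [hpowd, hA]
      exact_mod_cast (Nat.mul_lt_mul_right (Nat.succ_pos r)).mpr j.2
    · intro i α hα β hβ
      simp only [eval_pow]
      rw [hgS.2 i α hα β hβ]
  -- linear independence
  have hli : LinearIndependent F (fun j : Fin m => g ^ (j : ℕ)) := by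
    rw [Fintype.linearIndependent_iff]
    intro c hc j
    set q : F[X] := ∑ j : Fin m, C (c j) * X ^ (j : ℕ) with hq
    have hqc : q.comp g = 0 := by
      rw [hq]
      simpa [Polynomial.eval₂, smul_eq_C_mul] using hc
    have hq0 : q = 0 := by
      rcases comp_eq_zero_iff.mp hqc with h | ⟨_, h2⟩
      · exact h
      · exfalso
        have : g.natDegree = 0 := by rw [h2]; exact natDegree_C _
        simp [hgdeg] at this
    have := congrArg (fun p : F[X] => p.coeff (j : ℕ)) hq0
    simp only [hq, finset_sum_coeff, coeff_C_mul, coeff_X_pow, coeff_zero] at this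
    rwa [Finset.sum_eq_single j (fun b _ hb => by
        rw [if_neg (fun h => hb (Fin.ext h.symm)), mul_zero])
      (fun h => absurd (Finset.mem_univ j) h), if_pos rfl, mul_one] at this
  -- the submodule
  set T : Set F[X] := {f : F[X] | f.degree < (A.card : WithBot ℕ) ∧
        ∀ i, ∀ α ∈ B i, ∀ β ∈ B i, f.eval α = f.eval β} with hT
  have hS' : ∃ S' : Submodule F F[X], (S' : Set F[X]) = T := by
    refine ⟨{ carrier := T
              add_mem' := ?_
              zero_mem' := ?_
              smul_mem' := ?_ }, rfl⟩
    · rintro a b ⟨ha1, ha2⟩ ⟨hb1, hb2⟩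
      refine ⟨lt_of_le_of_lt (degree_add_le a b) (max_lt ha1 hb1), ?_⟩
      intro i α hα β hβ
      simp [ha2 i α hα β hβ, hb2 i α hα β hβ]
    · refine ⟨?_, by simp⟩
      rw [degree_zero, hA]
      exact_mod_cast WithBot.bot_lt_coe _
    · rintro c a ⟨ha1, ha2⟩
      refine ⟨lt_of_le_of_lt (degree_smul_le c a) ha1, ?_⟩
      intro i α hα β hβ
      simp [ha2 i α hα β hβ]
  obtain ⟨S', hS'⟩ := hS'
  have hmem' : ∀ f, f ∈ S' ↔ f ∈ T := fun f => by rw [← hS']; rfl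
  -- picks
  have hBne : ∀ i, (B i).Nonempty := fun i =>
    Finset.card_pos.mp (by rw [hBcard]; exact Nat.succ_pos r)
  set pick : Fin m → F := fun i => (hBne i).choose with hpick
  have hpickmem : ∀ i, pick i ∈ B i := fun i => (hBne i).choose_spec
  have hAmem : ∀ a ∈ A, ∃ i, a ∈ B i := by
    intro a ha
    rw [← hBunion] at ha
    simpa using Finset.mem_biUnion.mp ha
  -- the evaluation map
  set φ : S' →ₗ[F] (Fin m → F) :=
    { toFun := fun f i => (f : F[X]).eval (pick i)
      map_add' := fun a b => by funext i; simp
      map_smul' := fun c a => by funext i; simp } with hφ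
  have hinj : Function.Injective φ := by
    rw [← LinearMap.ker_eq_bot, LinearMap.ker_eq_bot']
    rintro ⟨f, hf⟩ hker
    have hf' := (hmem' f).mp hf
    have heval : ∀ a ∈ A, f.eval a = 0 := by
      intro a ha
      obtain ⟨i, hi⟩ := hAmem a ha
      have := hf'.2 i a hi (pick i) (hpickmem i)
      rw [this]
      exact congrFun hker i
    have : f = 0 := by
      refine eq_zero_of_natDegree_lt_card_of_eval_eq_zero' f A heval ?_
      rcases eq_or_ne f 0 with rfl | h0
      · simpa [hA] using Nat.mul_pos hm1 (Nat.succ_pos r)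
      · have := hf'.1
        rwa [degree_eq_natDegree h0, Nat.cast_lt] at this
    simp [this]
  have hsurj : Function.Surjective φ := by
    intro v
    set val : F → F := fun a => if h : ∃ i, a ∈ B i then v h.choose else 0 with hval
    have hvalB : ∀ i, ∀ a ∈ B i, val a = v i := by
      intro i a ha
      have hex : ∃ i, a ∈ B i := ⟨i, ha⟩
      have : hex.choose = i := by
        by_contra hne
        exact (Finset.disjoint_left.mp (hBdisj _ _ hne) hex.choose_spec) ha
      rw [hval]
      simp only [dif_pos hex, this]
    set f : F[X] := Lagrange.interpolate A id val with hf
    have hAinj : Set.InjOn (id : F → F) A := Set.injOn_id _ |>.mono (Set.subset_univ _)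
    have hfmem : f ∈ S' := by
      rw [hmem']
      refine ⟨Lagrange.degree_interpolate_lt _ hAinj, ?_⟩
      intro i α hα β hβ
      have hαA : α ∈ A := by rw [← hBunion]; exact Finset.mem_biUnion.mpr ⟨i, Finset.mem_univ i, hα⟩
      have hβA : β ∈ A := by rw [← hBunion]; exact Finset.mem_biUnion.mpr ⟨i, Finset.mem_univ i, hβ⟩
      have h1 := Lagrange.eval_interpolate_at_node val hAinj hαA
      have h2 := Lagrange.eval_interpolate_at_node val hAinj hβA
      simp only [id] at h1 h2
      rw [hf, h1, h2, hvalB i α hα, hvalB i β hβ]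
    refine ⟨⟨f, hfmem⟩, ?_⟩
    funext i
    have := Lagrange.eval_interpolate_at_node val hAinj
      (by rw [← hBunion]; exact Finset.mem_biUnion.mpr ⟨i, Finset.mem_univ i, hpickmem i⟩)
    simp only [id] at this
    show f.eval (pick i) = v i
    rw [hf, this, hvalB i _ (hpickmem i)]
  -- dimension
  set e : S' ≃ₗ[F] (Fin m → F) := LinearEquiv.ofBijective φ ⟨hinj, hsurj⟩ with he
  have : Module.Finite F S' := Module.Finite.equiv e.symm
  have hfr : Module.finrank F S' = m := by
    rw [e.finrank_eq, Module.finrank_fin_fun]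
  -- span
  set p : Fin m → S' := fun j => ⟨g ^ (j : ℕ), (hmem' _).mpr (hmemS j)⟩ with hp
  have hcomp : (S'.subtype ∘ p) = fun j : Fin m => g ^ (j : ℕ) := rfl
  have hlip : LinearIndependent F p := by
    apply LinearIndependent.of_comp S'.subtype
    rw [hcomp]
    exact hli
  have hspan : Submodule.span F (Set.range p) = ⊤ :=
    hlip.span_eq_top_of_card_eq_finrank' (by simp [hfr])
  have hspan' : ∀ f ∈ T, f ∈ Submodule.span F (Set.range fun j : Fin m => g ^ (j : ℕ)) := by
    intro f hf
    have hfm : (⟨f, (hmem' f).mpr hf⟩ : S') ∈ Submodule.span F (Set.range p) := by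
      rw [hspan]; trivial
    have := Submodule.mem_map_of_mem (f := S'.subtype) hfm
    rw [Submodule.map_span, ← Set.range_comp, hcomp] at this
    exact this
  refine ⟨hli, hmemS, hspan', ?_⟩
  -- degree claim
  intro f hf hf0
  obtain ⟨c, hc⟩ := (Submodule.mem_span_range_iff_exists_fun F).mp (hspan' f hf)
  set Tf : Finset (Fin m) := Finset.univ.filter (fun j => c j ≠ 0) with hTf
  have hTfne : Tf.Nonempty := by
    by_contra hne
    rw [Finset.not_nonempty_iff_eq_empty] at hne
    apply hf0
    rw [← hc]
    refine Finset.sum_eq_zero fun j _ => ?_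
    have : c j = 0 := by
      by_contra h
      have : j ∈ Tf := Finset.mem_filter.mpr ⟨Finset.mem_univ j, h⟩
      simp [hne] at this
    simp [this]
  set j0 := Tf.max' hTfne with hj0
  have hj0mem : j0 ∈ Tf := Tf.max'_mem hTfne
  have hc0 : c j0 ≠ 0 := (Finset.mem_filter.mp hj0mem).2
  have hfsum : f = ∑ j ∈ Tf, c j • g ^ (j : ℕ) := by
    rw [← hc]
    symm
    apply Finset.sum_filter_of_ne
    intro x _ hx h0
    apply hx
    simp [h0]
  have hsplit : f = c j0 • g ^ (j0 : ℕ) + ∑ j ∈ Tf.erase j0, c j • g ^ (j : ℕ) := by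
    rw [hfsum, ← Finset.add_sum_erase _ (fun j => c j • g ^ (j : ℕ)) hj0mem]
  have hmain : (c j0 • g ^ (j0 : ℕ)).degree = (((j0 : ℕ) * (r + 1) : ℕ) : WithBot ℕ) := by
    rw [smul_eq_C_mul, degree_mul, degree_C hc0, zero_add, hpowd]
  have hrest : (∑ j ∈ Tf.erase j0, c j • g ^ (j : ℕ)).degree <
      (((j0 : ℕ) * (r + 1) : ℕ) : WithBot ℕ) := by
    refine lt_of_le_of_lt (degree_sum_le _ _) ?_
    rw [Finset.sup_lt_iff (by exact_mod_cast WithBot.bot_lt_coe _)]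
    intro j hj
    have hjlt : (j : ℕ) < (j0 : ℕ) := by
      have hle : j ≤ j0 := Tf.le_max' j (Finset.mem_of_mem_erase hj)
      have hne : j ≠ j0 := Finset.ne_of_mem_erase hj
      exact lt_of_le_of_ne hle (fun h => hne (Fin.ext h))
    calc (c j • g ^ (j : ℕ)).degree ≤ (g ^ (j : ℕ)).degree := degree_smul_le _ _
      _ = (((j : ℕ) * (r + 1) : ℕ) : WithBot ℕ) := hpowd _
      _ < _ := by exact_mod_cast (Nat.mul_lt_mul_right (Nat.succ_pos r)).mpr hjlt
  have hdeg : f.degree = (((j0 : ℕ) * (r + 1) : ℕ) : WithBot ℕ) := by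
    rw [hsplit, degree_add_eq_left_of_degree_lt (by rw [hmain]; exact hrest), hmain]
  exact ⟨j0, j0.2, natDegree_eq_of_degree_eq_some hdeg⟩
end

section
/- Let F be a finite field, A ⊆ F with |A| = n, (r+1) | n, and let 𝒜 be a partition of A into m = n/(r+1) blocks of size r+1. Let ℱ_𝒜^r = ⊕_{i=0}^{r−1} F_𝒜[x]·x^i, let k ≤ mr, and let Φ : F^k → ℱ_𝒜^r be an injective map; write f_a = Φ(a) and C = {(f_a(α))_{α∈A} : a ∈ F^k}. Then: (i) for every a ∈ F^k and every block A_j there is a polynomial δ of degree ≤ r−1 with δ(β) = f_a(β) for all β ∈ A_j, so C has locality r; and (ii) the Hamming distance of C satisfies d(C) ≥ n − max_{a≠b ∈ F^k} deg(f_a − f_b). -/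
open Polynomial

/-- General construction of `(n, k, r)` LRC codes: let `A ⊆ F` with `|A| = n`,
`(r+1) ∣ n`, let `𝒜 = {B i}` be a partition of `A` into blocks of size `r+1`, let
`k ≤ (n/(r+1))·r` and let `Φ : F^k → ℱ_𝒜^r = ⊕_{i<r} F_𝒜[x]·x^i` be injective.  Then
(i) for every message `a` and every block there is a polynomial `δ` of degree `≤ r-1`
agreeing with `f_a = Φ a` on the block (hence the code has locality `r`), and
(ii) the Hamming distance between any two distinct codewords is at least
`n - max_{a ≠ b} deg (f_a - f_b)`. -/
theorem stmt_13 {F : Type*} [Field F] [Fintype F] [DecidableEq F]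
    (n r k : ℕ) (hr : 1 ≤ r) (hrn : (r + 1) ∣ n)
    (A : Finset F) (hA : A.card = n)
    (B : Fin (n / (r + 1)) → Finset F)
    (hBcard : ∀ i, (B i).card = r + 1)
    (hBdisj : ∀ i j, i ≠ j → Disjoint (B i) (B j))
    (hBunion : Finset.univ.biUnion B = A)
    (hk : k ≤ (n / (r + 1)) * r)
    (Φ : (Fin k → F) → Polynomial F) (hΦinj : Function.Injective Φ)
    (hΦmem : ∀ a, ∃ fc : Fin r → Polynomial F,
      (∀ i, (fc i).degree < (A.card : WithBot ℕ) ∧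
        ∀ l, ∀ α ∈ B l, ∀ β ∈ B l, (fc i).eval α = (fc i).eval β) ∧
      Φ a = ∑ i : Fin r, fc i * X ^ (i : ℕ))
    (M : ℕ)
    (hM : IsGreatest {d : ℕ | ∃ a b : Fin k → F, a ≠ b ∧ (Φ a - Φ b).natDegree = d} M) :
    (∀ a : Fin k → F, ∀ j, ∃ δ : Polynomial F, δ.degree < (r : ℕ) ∧
        ∀ β ∈ B j, δ.eval β = (Φ a).eval β) ∧
    (∀ a b : Fin k → F, ∀ j, ∀ α ∈ B j,
        (∀ β ∈ B j, β ≠ α → (Φ a).eval β = (Φ b).eval β) →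
        (Φ a).eval α = (Φ b).eval α) ∧
    (∀ a b : Fin k → F, a ≠ b →
        (n : ℤ) - (M : ℤ) ≤
          (hammingDist (fun α : ↥A => (Φ a).eval (α : F))
            (fun α : ↥A => (Φ b).eval (α : F)) : ℤ)) := by
  classical
  have key : ∀ a : Fin k → F, ∀ j, ∃ δ : Polynomial F, δ.degree < (r : ℕ) ∧
      ∀ β ∈ B j, δ.eval β = (Φ a).eval β := by
    intro a j
    obtain ⟨fc, hfc, hsum⟩ := hΦmem a
    obtain ⟨β0, hβ0⟩ := Finset.card_pos.mp (show 0 < (B j).card by rw [hBcard j]; omega)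
    refine ⟨∑ i : Fin r, C ((fc i).eval β0) * X ^ (i : ℕ), ?_, ?_⟩
    · refine lt_of_le_of_lt (degree_sum_le _ _) ?_
      rw [Finset.sup_lt_iff (by exact_mod_cast WithBot.bot_lt_coe r)]
      intro i _
      refine lt_of_le_of_lt (degree_C_mul_X_pow_le _ _) ?_
      exact_mod_cast Nat.cast_lt.mpr i.2
    · intro β hβ
      rw [hsum, eval_finset_sum, eval_finset_sum]
      refine Finset.sum_congr rfl fun i _ => ?_
      rw [eval_mul, eval_mul, eval_C, (hfc i).2 j β0 hβ0 β hβ]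
  refine ⟨key, ?_, ?_⟩
  · intro a b j α hα hagree
    obtain ⟨δa, hda, hea⟩ := key a j
    obtain ⟨δb, hdb, heb⟩ := key b j
    have hcard : ((B j).erase α).card = r := by
      rw [Finset.card_erase_of_mem hα, hBcard j]; omega
    have : δa = δb := by
      apply Polynomial.eq_of_degrees_lt_of_eval_finset_eq ((B j).erase α)
        (by rw [hcard]; exact hda) (by rw [hcard]; exact hdb)
      intro x hx
      rw [hea x (Finset.mem_of_mem_erase hx), heb x (Finset.mem_of_mem_erase hx)]
      exact hagree x (Finset.mem_of_mem_erase hx) (Finset.ne_of_mem_erase hx)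
    rw [← hea α hα, ← heb α hα, this]
  · intro a b hab
    set g := Φ a - Φ b with hg
    have hg0 : g ≠ 0 := sub_ne_zero.mpr fun h => hab (hΦinj h)
    have hdeg : g.natDegree ≤ M := hM.2 ⟨a, b, hab, rfl⟩
    -- count of equal coordinates
    have hzero : ((A.filter fun α => g.eval α = 0)).card ≤ M := by
      calc ((A.filter fun α => g.eval α = 0)).card
          ≤ g.roots.toFinset.card := by
            apply Finset.card_le_card
            intro x hx
            simp only [Finset.mem_filter] at hx
            rw [Multiset.mem_toFinset, mem_roots hg0]
            exact hx.2
        _ ≤ Multiset.card g.roots := Multiset.toFinset_card_le _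
        _ ≤ g.natDegree := g.card_roots'
        _ ≤ M := hdeg
    have hsplit :
        hammingDist (fun α : ↥A => (Φ a).eval (α : F)) (fun α : ↥A => (Φ b).eval (α : F))
          + ((A.filter fun α => g.eval α = 0)).card = n := by
      have h1 : ((Finset.univ.filter fun α : ↥A => g.eval (α : F) = 0)).card
          = ((A.filter fun α => g.eval α = 0)).card := by
        refine Finset.card_bij (fun x _ => x.1) ?_ ?_ ?_
        · intro x hx; simp only [Finset.mem_filter] at hx ⊢; exact ⟨x.2, hx.2⟩
        · intro x _ y _ h; exact Subtype.ext h
        · intro y hy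
          simp only [Finset.mem_filter] at hy
          exact ⟨⟨y, hy.1⟩, by simp [hy.2], rfl⟩
      have h2 : hammingDist (fun α : ↥A => (Φ a).eval (α : F))
            (fun α : ↥A => (Φ b).eval (α : F))
          = ((Finset.univ.filter fun α : ↥A => ¬ (g.eval (α : F) = 0))).card := by
        unfold hammingDist
        congr 1
        apply Finset.filter_congr
        intro x _
        simp [hg, sub_eq_zero]
      rw [h2, ← h1]
      have := Finset.card_filter_add_card_filter_not
        (s := (Finset.univ : Finset ↥A)) (p := fun α : ↥A => g.eval (α : F) = 0)
      rw [Finset.card_univ, Fintype.card_coe, hA] at this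
      omega
    have hhd : (n : ℤ) - ((A.filter fun α => g.eval α = 0)).card
        = (hammingDist (fun α : ↥A => (Φ a).eval (α : F))
            (fun α : ↥A => (Φ b).eval (α : F)) : ℤ) := by
      rw [← hsplit]; push_cast; ring
    rw [← hhd]
    omega
end

section
/- Let F be a finite field and A ⊆ F with |A| = n. Let 𝒜 be a partition of A into blocks of size r+1 and 𝒜' a partition of A into blocks of size s+1, and assume 𝒜 and 𝒜' are orthogonal. Let V_m = ℱ_𝒜^r ∩ ℱ_{𝒜'}^s ∩ P_m, where P_m is the space of polynomials of degree < m, let Φ : F^k → V_m be an injective map, f_a = Φ(a), and C = {(f_a(α))_{α∈A} : a ∈ F^k}. Then the minimum Hamming distance of C is at least n − m + 1, and for every a ∈ F^k and every α ∈ A: f_a agrees on the 𝒜-block containing α with a polynomial of degree ≤ r−1, and f_a agrees on the 𝒜'-block containing α with a polynomial of degree ≤ s−1; consequently every symbol has two disjoint recovering sets of sizes r and s. -/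
/-!
On an `𝒜`-block the coefficient polynomials `fᵢ` of `Φ a = ∑ fᵢ xⁱ` are constant, so there
`Φ a` agrees with `∑ cᵢ xⁱ`, of degree `< r`; since the block has `r + 1` points, the values on
any `r` of them determine that polynomial and hence the value at the remaining point. The same
holds for `𝒜'` with `s`, and orthogonality makes the two blocks through a point meet only in
that point. The distance bound is Reed–Solomon's: two distinct codewords differ by a nonzero
polynomial of degree `< m`, which vanishes at fewer than `m` points of `A`.
-/

open Polynomial

namespace Polynomial

variable {F : Type*} [Field F]

theorem exists_degree_lt_eval_eq_of_eq_sum_mul_X_pow {r : ℕ} {g : F[X]} {S : Finset F}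
    (fc : Fin r → F[X]) (hconst : ∀ i, ∀ α ∈ S, ∀ β ∈ S, (fc i).eval α = (fc i).eval β)
    (hg : g = ∑ i, fc i * X ^ (i : ℕ)) :
    ∃ δ : F[X], δ.degree < r ∧ ∀ β ∈ S, δ.eval β = g.eval β := by
  rcases S.eq_empty_or_nonempty with rfl | ⟨α₀, hα₀⟩
  · exact ⟨0, by simp, by simp⟩
  refine ⟨∑ i, C ((fc i).eval α₀) * X ^ (i : ℕ), degree_sum_fin_lt _, fun β hβ => ?_⟩
  simp only [hg, eval_finsetSum, eval_mul, eval_pow, eval_C, eval_X, hconst _ α₀ hα₀ β hβ]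

theorem eval_eq_of_eval_eq_on_erase [DecidableEq F] {r : ℕ} {S : Finset F} (hS : S.card = r + 1)
    {α : F} (hα : α ∈ S) {p q : F[X]}
    (hp : ∃ δ : F[X], δ.degree < r ∧ ∀ β ∈ S, δ.eval β = p.eval β)
    (hq : ∃ δ : F[X], δ.degree < r ∧ ∀ β ∈ S, δ.eval β = q.eval β)
    (hpq : ∀ β ∈ S.erase α, p.eval β = q.eval β) :
    p.eval α = q.eval α := by
  obtain ⟨δp, hδp, hp⟩ := hp
  obtain ⟨δq, hδq, hq⟩ := hq
  have hcard : (S.erase α).card = r := by simp [Finset.card_erase_of_mem hα, hS]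
  have hδ : δp = δq := eq_of_degrees_lt_of_eval_finset_eq (S.erase α) (hcard ▸ hδp) (hcard ▸ hδq)
    fun β hβ => by
      rw [hp β (Finset.mem_of_mem_erase hβ), hq β (Finset.mem_of_mem_erase hβ), hpq β hβ]
  rw [← hp α hα, ← hq α hα, hδ]

theorem card_le_hammingDist_add_natDegree_sub [DecidableEq F] {ι : Type*} [Fintype ι]
    {v : ι → F} (hv : Function.Injective v) {p q : F[X]} (hpq : p ≠ q) :
    Fintype.card ι ≤
      hammingDist (fun i => p.eval (v i)) (fun i => q.eval (v i)) + (p - q).natDegree := by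
  set agree := Finset.univ.filter fun i => p.eval (v i) = q.eval (v i)
  have hagree : agree.card ≤ (p - q).natDegree := by
    rw [← Finset.card_map ⟨v, hv⟩]
    refine card_le_degree_of_subset_roots fun x hx => ?_
    obtain ⟨i, hi, rfl⟩ := Finset.mem_map.mp hx
    rw [mem_roots (sub_ne_zero.mpr hpq), IsRoot, eval_sub, sub_eq_zero]
    exact (Finset.mem_filter.mp hi).2
  have hsplit : agree.card + hammingDist (fun i => p.eval (v i)) (fun i => q.eval (v i))
      = Fintype.card ι := Finset.card_filter_add_card_filter_not _
  omega

end Polynomial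

theorem Finset.disjoint_erase_erase_of_card_inter_le_one {α : Type*} [DecidableEq α]
    {s t : Finset α} {a : α} (ha : a ∈ s ∩ t) (hst : (s ∩ t).card ≤ 1) :
    Disjoint (s.erase a) (t.erase a) := by
  refine Finset.disjoint_left.mpr fun b hbs hbt => ?_
  have hb : b ∈ s ∩ t := Finset.mem_inter.mpr ⟨mem_of_mem_erase hbs, mem_of_mem_erase hbt⟩
  exact absurd (Finset.one_lt_card.mpr ⟨a, ha, b, hb, (ne_of_mem_erase hbs).symm⟩) (by omega)

theorem stmt_14_general {F : Type*} [Field F] [DecidableEq F]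
    (n r s k m : ℕ) (m₁ m₂ : ℕ)
    (A : Finset F) (hA : A.card = n)
    (B : Fin m₁ → Finset F) (B' : Fin m₂ → Finset F)
    (hBcard : ∀ i, (B i).card = r + 1) (hB'card : ∀ j, (B' j).card = s + 1)
    (hBunion : Finset.univ.biUnion B = A)
    (hB'union : Finset.univ.biUnion B' = A)
    (horth : ∀ i j, ((B i) ∩ (B' j)).card ≤ 1)
    (Φ : (Fin k → F) → Polynomial F) (hΦinj : Function.Injective Φ)
    (hΦ₁ : ∀ a, ∃ fc : Fin r → Polynomial F,
      (∀ i, (fc i).degree < (A.card : WithBot ℕ) ∧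
        ∀ l, ∀ α ∈ B l, ∀ β ∈ B l, (fc i).eval α = (fc i).eval β) ∧
      Φ a = ∑ i : Fin r, fc i * X ^ (i : ℕ))
    (hΦ₂ : ∀ a, ∃ fc : Fin s → Polynomial F,
      (∀ i, (fc i).degree < (A.card : WithBot ℕ) ∧
        ∀ l, ∀ α ∈ B' l, ∀ β ∈ B' l, (fc i).eval α = (fc i).eval β) ∧
      Φ a = ∑ i : Fin s, fc i * X ^ (i : ℕ))
    (hΦdeg : ∀ a, (Φ a).degree < (m : WithBot ℕ)) :
    (∀ a b : Fin k → F, a ≠ b →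
      (n : ℤ) - (m : ℤ) + 1 ≤
        (hammingDist (fun α : ↥A => (Φ a).eval (α : F))
          (fun α : ↥A => (Φ b).eval (α : F)) : ℤ)) ∧
    (∀ a : Fin k → F, ∀ i, ∃ δ : Polynomial F, δ.degree < (r : ℕ) ∧
        ∀ β ∈ B i, δ.eval β = (Φ a).eval β) ∧
    (∀ a : Fin k → F, ∀ j, ∃ δ : Polynomial F, δ.degree < (s : ℕ) ∧
        ∀ β ∈ B' j, δ.eval β = (Φ a).eval β) ∧
    (∀ α ∈ A, ∃ i j, α ∈ B i ∧ α ∈ B' j ∧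
      Disjoint ((B i).erase α) ((B' j).erase α) ∧
      ((B i).erase α).card = r ∧ ((B' j).erase α).card = s ∧
      (∀ a b : Fin k → F,
        (∀ β ∈ (B i).erase α, (Φ a).eval β = (Φ b).eval β) →
        (Φ a).eval α = (Φ b).eval α) ∧
      (∀ a b : Fin k → F,
        (∀ β ∈ (B' j).erase α, (Φ a).eval β = (Φ b).eval β) →
        (Φ a).eval α = (Φ b).eval α)) := by
  have hlocal₁ : ∀ a i, ∃ δ : F[X], δ.degree < r ∧ ∀ β ∈ B i, δ.eval β = (Φ a).eval β :=
    fun a i => by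
      obtain ⟨fc, hfc, hsum⟩ := hΦ₁ a
      exact exists_degree_lt_eval_eq_of_eq_sum_mul_X_pow fc (fun l => (hfc l).2 i) hsum
  have hlocal₂ : ∀ a j, ∃ δ : F[X], δ.degree < s ∧ ∀ β ∈ B' j, δ.eval β = (Φ a).eval β :=
    fun a j => by
      obtain ⟨fc, hfc, hsum⟩ := hΦ₂ a
      exact exists_degree_lt_eval_eq_of_eq_sum_mul_X_pow fc (fun l => (hfc l).2 j) hsum
  refine ⟨fun a b hab => ?_, hlocal₁, hlocal₂, fun α hα => ?_⟩
  · have hne : Φ a ≠ Φ b := hΦinj.ne hab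
    have hdeg : (Φ a - Φ b).natDegree < m := (natDegree_lt_iff_degree_lt (sub_ne_zero.mpr hne)).mpr
      ((degree_sub_le _ _).trans_lt (max_lt (hΦdeg a) (hΦdeg b)))
    have := card_le_hammingDist_add_natDegree_sub Subtype.val_injective hne (ι := A)
    rw [Fintype.card_coe, hA] at this
    omega
  · obtain ⟨i, -, hi⟩ := Finset.mem_biUnion.mp (hBunion ▸ hα)
    obtain ⟨j, -, hj⟩ := Finset.mem_biUnion.mp (hB'union ▸ hα)
    refine ⟨i, j, hi, hj, Finset.disjoint_erase_erase_of_card_inter_le_one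
      (Finset.mem_inter.mpr ⟨hi, hj⟩) (horth i j), by simp [Finset.card_erase_of_mem hi, hBcard],
      by simp [Finset.card_erase_of_mem hj, hB'card], fun a b => ?_, fun a b => ?_⟩
    · exact eval_eq_of_eval_eq_on_erase (hBcard i) hi (hlocal₁ a i) (hlocal₁ b i)
    · exact eval_eq_of_eval_eq_on_erase (hB'card j) hj (hlocal₂ a j) (hlocal₂ b j)

/-- LRC codes with two disjoint recovering sets from orthogonal partitions: let `𝒜` (blocks
`B i`, size `r+1`) and `𝒜'` (blocks `B' j`, size `s+1`) be orthogonal partitions of `A`,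
`|A| = n`, and let `Φ : F^k → V_m = ℱ_𝒜^r ∩ ℱ_{𝒜'}^s ∩ P_m` be injective.  Then the code
`{(Φa(α))_{α ∈ A}}` has minimum distance `≥ n - m + 1`, on each `𝒜`-block `Φ a` agrees
with a polynomial of degree `≤ r-1`, on each `𝒜'`-block with one of degree `≤ s-1`, and
every symbol has two disjoint recovering sets of sizes `r` and `s`. -/
theorem stmt_14 {F : Type*} [Field F] [Fintype F] [DecidableEq F]
    (n r s k m : ℕ) (m₁ m₂ : ℕ)
    (A : Finset F) (hA : A.card = n)
    (B : Fin m₁ → Finset F) (B' : Fin m₂ → Finset F)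
    (hBcard : ∀ i, (B i).card = r + 1) (hB'card : ∀ j, (B' j).card = s + 1)
    (hBdisj : ∀ i j, i ≠ j → Disjoint (B i) (B j))
    (hB'disj : ∀ i j, i ≠ j → Disjoint (B' i) (B' j))
    (hBunion : Finset.univ.biUnion B = A)
    (hB'union : Finset.univ.biUnion B' = A)
    (horth : ∀ i j, ((B i) ∩ (B' j)).card ≤ 1)
    (Φ : (Fin k → F) → Polynomial F) (hΦinj : Function.Injective Φ)
    (hΦ₁ : ∀ a, ∃ fc : Fin r → Polynomial F,
      (∀ i, (fc i).degree < (A.card : WithBot ℕ) ∧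
        ∀ l, ∀ α ∈ B l, ∀ β ∈ B l, (fc i).eval α = (fc i).eval β) ∧
      Φ a = ∑ i : Fin r, fc i * X ^ (i : ℕ))
    (hΦ₂ : ∀ a, ∃ fc : Fin s → Polynomial F,
      (∀ i, (fc i).degree < (A.card : WithBot ℕ) ∧
        ∀ l, ∀ α ∈ B' l, ∀ β ∈ B' l, (fc i).eval α = (fc i).eval β) ∧
      Φ a = ∑ i : Fin s, fc i * X ^ (i : ℕ))
    (hΦdeg : ∀ a, (Φ a).degree < (m : WithBot ℕ)) :
    (∀ a b : Fin k → F, a ≠ b →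
      (n : ℤ) - (m : ℤ) + 1 ≤
        (hammingDist (fun α : ↥A => (Φ a).eval (α : F))
          (fun α : ↥A => (Φ b).eval (α : F)) : ℤ)) ∧
    (∀ a : Fin k → F, ∀ i, ∃ δ : Polynomial F, δ.degree < (r : ℕ) ∧
        ∀ β ∈ B i, δ.eval β = (Φ a).eval β) ∧
    (∀ a : Fin k → F, ∀ j, ∃ δ : Polynomial F, δ.degree < (s : ℕ) ∧
        ∀ β ∈ B' j, δ.eval β = (Φ a).eval β) ∧
    (∀ α ∈ A, ∃ i j, α ∈ B i ∧ α ∈ B' j ∧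
      Disjoint ((B i).erase α) ((B' j).erase α) ∧
      ((B i).erase α).card = r ∧ ((B' j).erase α).card = s ∧
      (∀ a b : Fin k → F,
        (∀ β ∈ (B i).erase α, (Φ a).eval β = (Φ b).eval β) →
        (Φ a).eval α = (Φ b).eval α) ∧
      (∀ a b : Fin k → F,
        (∀ β ∈ (B' j).erase α, (Φ a).eval β = (Φ b).eval β) →
        (Φ a).eval α = (Φ b).eval α)) :=
  stmt_14_general n r s k m m₁ m₂ A hA B B' hBcard hB'card hBunion hB'union horth Φ hΦinj hΦ₁ hΦ₂
    hΦdeg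
end

section
/- Let 𝒜_1, ..., 𝒜_t be t mutually orthogonal partitions of a finite set A, and let m be the smallest positive integer satisfying t·f(m) ≤ C(m,2), where f(m) = m/2 if m is even and f(m) = (m+3)/2 if m is odd, and C(m,2) is the binomial coefficient. Then for every nonempty subset B ⊆ A with |B| < m there exist an index i ∈ {1,...,t} and a block C ∈ 𝒜_i such that |B ∩ C| = 1. -/
/-!
Suppose no block of any `P i` meets `B` in exactly one point, and let `b = |B|`. Each `P i`
cuts `B` into traces of sizes `nₓ ≠ 1` summing to `b`, so the ordered pairs of distinct points
of `B` lying in a common block of `P i` number `∑ nₓ (nₓ - 1) ≥ b`, and even `≥ b + 3` when `b`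
is odd, since then some trace has odd size `≥ 3`. By orthogonality these pair sets are disjoint
for different `i`, so `t · 2f(b) ≤ b (b - 1)`, and minimality of `m` forces `m ≤ b`.
-/

open Finset

namespace Nat

theorem le_sum_mul_pred {ι : Type*} (s : Finset ι) (n : ι → ℕ) (hn : ∀ i ∈ s, n i ≠ 1) :
    (if Even (∑ i ∈ s, n i) then ∑ i ∈ s, n i else ∑ i ∈ s, n i + 3) ≤
      ∑ i ∈ s, n i * (n i - 1) := by
  classical
  have hle : ∀ i ∈ s, n i ≤ n i * (n i - 1) := fun i hi => by
    obtain h | h : n i = 0 ∨ 2 ≤ n i := by have := hn i hi; omega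
    · simp [h]
    · exact Nat.le_mul_of_pos_right _ (by omega)
  split_ifs with heven
  · exact sum_le_sum hle
  · obtain ⟨j, hj, hodd⟩ : ∃ j ∈ s, ¬Even (n j) := by
      by_contra! h
      exact heven (even_sum _ h)
    have h3 : 3 ≤ n j := by
      have := Nat.odd_iff.mp (Nat.not_even_iff_odd.mp hodd)
      have := hn j hj
      omega
    have hj_le : n j + 3 ≤ n j * (n j - 1) :=
      calc n j + 3 ≤ n j * 2 := by omega
        _ ≤ n j * (n j - 1) := Nat.mul_le_mul_left _ (by omega)
    rw [← add_sum_erase s _ hj, ← add_sum_erase s _ hj]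
    have := sum_le_sum fun i (hi : i ∈ s.erase j) => hle i (mem_of_mem_erase hi)
    omega

end Nat

section BlockPairs

variable {α : Type*} [DecidableEq α]

def blockPairs (B : Finset α) (P : Finset (Finset α)) : Finset (α × α) :=
  P.biUnion fun X => (B ∩ X).offDiag

variable {B : Finset α} {P : Finset (Finset α)}

theorem blockPairs_subset_offDiag : blockPairs B P ⊆ B.offDiag := by
  intro p hp
  obtain ⟨X, -, hp⟩ := mem_biUnion.mp hp
  exact offDiag_mono inter_subset_left hp

theorem pairwiseDisjoint_inter (hP : ∀ a ∈ B, ∃! X, X ∈ P ∧ a ∈ X) :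
    (P : Set (Finset α)).PairwiseDisjoint (B ∩ ·) := by
  intro X hX Y hY hXY
  refine disjoint_left.mpr fun a haX haY => hXY ?_
  obtain ⟨haB, haX⟩ := mem_inter.mp haX
  exact (hP a haB).unique ⟨hX, haX⟩ ⟨hY, (mem_inter.mp haY).2⟩

theorem sum_card_inter_eq_card (hP : ∀ a ∈ B, ∃! X, X ∈ P ∧ a ∈ X) :
    ∑ X ∈ P, #(B ∩ X) = #B := by
  rw [← card_biUnion (pairwiseDisjoint_inter hP)]
  congr 1
  ext a
  simp only [mem_biUnion, mem_inter]
  constructor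
  · rintro ⟨X, -, ha, -⟩
    exact ha
  · intro ha
    obtain ⟨X, ⟨hX, haX⟩, -⟩ := hP a ha
    exact ⟨X, hX, ha, haX⟩

theorem card_blockPairs (hP : ∀ a ∈ B, ∃! X, X ∈ P ∧ a ∈ X) :
    #(blockPairs B P) = ∑ X ∈ P, #(B ∩ X) * (#(B ∩ X) - 1) := by
  rw [blockPairs, card_biUnion]
  · simp only [offDiag_card, Nat.mul_sub_one]
  · intro X hX Y hY hXY
    refine disjoint_left.mpr fun p hpX hpY => ?_
    exact disjoint_left.mp (pairwiseDisjoint_inter hP hX hY hXY)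
      (mem_offDiag.mp hpX).1 (mem_offDiag.mp hpY).1

theorem le_card_blockPairs (hP : ∀ a ∈ B, ∃! X, X ∈ P ∧ a ∈ X)
    (hsingle : ∀ X ∈ P, #(B ∩ X) ≠ 1) :
    (if Even #B then #B else #B + 3) ≤ #(blockPairs B P) := by
  rw [card_blockPairs hP, ← sum_card_inter_eq_card hP]
  exact Nat.le_sum_mul_pred P _ hsingle

theorem disjoint_blockPairs {Q : Finset (Finset α)}
    (horth : ∀ X ∈ P, ∀ Y ∈ Q, #(X ∩ Y) ≤ 1) :
    Disjoint (blockPairs B P) (blockPairs B Q) := by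
  refine disjoint_left.mpr fun p hpP hpQ => ?_
  obtain ⟨X, hX, hpX⟩ := mem_biUnion.mp hpP
  obtain ⟨Y, hY, hpY⟩ := mem_biUnion.mp hpQ
  simp only [mem_offDiag, mem_inter] at hpX hpY
  obtain ⟨⟨-, h1X⟩, ⟨-, h2X⟩, hne⟩ := hpX
  obtain ⟨⟨-, h1Y⟩, ⟨-, h2Y⟩, -⟩ := hpY
  have := one_lt_card.mpr ⟨p.1, mem_inter.mpr ⟨h1X, h1Y⟩, p.2, mem_inter.mpr ⟨h2X, h2Y⟩, hne⟩
  exact (horth X hX Y hY).not_gt this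

end BlockPairs

theorem stmt_16_general {α : Type*} [DecidableEq α] (A : Finset α) (t m : ℕ)
    (P : Fin t → Finset (Finset α))
    (hpart : ∀ i, ∀ a ∈ A, ∃! X, X ∈ P i ∧ a ∈ X)
    (horth : ∀ i j, i ≠ j → ∀ X ∈ P i, ∀ Y ∈ P j, (X ∩ Y).card ≤ 1)
    (hm₂ : ∀ m', 0 < m' →
      (if Even m' then t * m' else t * (m' + 3)) ≤ m' * (m' - 1) → m ≤ m')
    (B : Finset α) (hBA : B ⊆ A) (hBne : B.Nonempty) (hBcard : B.card < m) :
    ∃ i, ∃ C ∈ P i, (B ∩ C).card = 1 := by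
  by_contra! hsingle
  have hpartB : ∀ i, ∀ a ∈ B, ∃! X, X ∈ P i ∧ a ∈ X := fun i a ha => hpart i a (hBA ha)
  have hcount : t * (if Even #B then #B else #B + 3) ≤ #B * (#B - 1) :=
    calc t * (if Even #B then #B else #B + 3)
        = ∑ _i : Fin t, (if Even #B then #B else #B + 3) := by simp
      _ ≤ ∑ i, #(blockPairs B (P i)) :=
          sum_le_sum fun i _ => le_card_blockPairs (hpartB i) (hsingle i)
      _ = #(univ.biUnion fun i => blockPairs B (P i)) :=
          (card_biUnion fun i _ j _ hij => disjoint_blockPairs (horth i j hij)).symm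
      _ ≤ #B.offDiag := card_le_card (biUnion_subset.mpr fun i _ => blockPairs_subset_offDiag)
      _ = #B * (#B - 1) := by rw [offDiag_card, Nat.mul_sub_one]
  have := hm₂ #B hBne.card_pos (by rwa [← mul_ite])
  omega

/-- Lemma on mutually orthogonal partitions: let `𝒫 1, ..., 𝒫 t` be mutually orthogonal
partitions of a finite set `A`, and let `m` be the smallest positive integer with
`t·f(m) ≤ C(m,2)` (equivalently `t·m ≤ m(m-1)` for even `m` and `t·(m+3) ≤ m(m-1)` for odd
`m`).  Then every nonempty `B ⊆ A` with `|B| < m` meets some block of some partition in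
exactly one element. -/
theorem stmt_16 {α : Type*} [DecidableEq α] (A : Finset α) (t m : ℕ)
    (P : Fin t → Finset (Finset α))
    (hblocks : ∀ i, ∀ X ∈ P i, X ⊆ A ∧ X.Nonempty)
    (hpart : ∀ i, ∀ a ∈ A, ∃! X, X ∈ P i ∧ a ∈ X)
    (horth : ∀ i j, i ≠ j → ∀ X ∈ P i, ∀ Y ∈ P j, (X ∩ Y).card ≤ 1)
    (hm₀ : 0 < m)
    (hm₁ : (if Even m then t * m else t * (m + 3)) ≤ m * (m - 1))
    (hm₂ : ∀ m', 0 < m' →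
      (if Even m' then t * m' else t * (m' + 3)) ≤ m' * (m' - 1) → m ≤ m')
    (B : Finset α) (hBA : B ⊆ A) (hBne : B.Nonempty) (hBcard : B.card < m) :
    ∃ i, ∃ C ∈ P i, (B ∩ C).card = 1 :=
  stmt_16_general A t m P hpart horth hm₂ B hBA hBne hBcard
end

section
/- Let C ⊆ F^n be a code and let 𝒜_1, ..., 𝒜_t be mutually orthogonal partitions of the coordinate set {1,...,n} such that for every codeword x ∈ C, every coordinate i, and every block B of any partition 𝒜_j containing i, the value x_i is determined by the values (x_l)_{l ∈ B\{i}} (i.e., any two codewords agreeing on B\{i} agree at i). Let m be the smallest positive integer satisfying t·f(m) ≤ C(m,2), where f(m) = m/2 if m is even and f(m) = (m+3)/2 if m is odd. Then the minimum Hamming distance of C is at least m. -/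
private lemma two_mul_choose_two (a : ℕ) : 2 * a.choose 2 = a * (a - 1) := by
  rcases a with _ | b
  · simp
  · rw [Nat.choose_two_right, Nat.succ_sub_one, Nat.mul_comm (b+1) b,
      Nat.mul_div_cancel' ((Nat.even_mul_succ_self b).two_dvd)]

private lemma parts_bound {ι : Type*} (B : Finset ι) (g : ι → ℕ)
    (h2 : ∀ i ∈ B, 2 ≤ g i) {d : ℕ} (hsum : ∑ i ∈ B, g i = d) :
    (if Even d then d else d + 3) ≤ ∑ i ∈ B, g i * (g i - 1) := by
  have key : ∑ i ∈ B, g i * (g i - 1) = d + ∑ i ∈ B, g i * (g i - 2) := by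
    rw [← hsum, ← Finset.sum_add_distrib]
    refine Finset.sum_congr rfl fun i hi => ?_
    have := h2 i hi
    rcases Nat.exists_eq_add_of_le this with ⟨c, hc⟩
    rw [hc]
    have h1 : 2 + c - 1 = c + 1 := by omega
    have h2 : 2 + c - 2 = c := by omega
    rw [h1, h2]; ring
  rw [key]
  split_ifs with he
  · omega
  · have hex : ∃ i ∈ B, Odd (g i) := by
      by_contra hall
      push_neg at hall
      simp only [Nat.not_odd_iff_even] at hall
      have : Even (∑ i ∈ B, g i) := Finset.even_sum g hall
      rw [hsum] at this
      exact he this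
    obtain ⟨i, hi, hodd⟩ := hex
    have h3 : 3 ≤ g i := by
      have := h2 i hi
      rcases hodd with ⟨k, hk⟩
      omega
    have h4 : 3 ≤ g i * (g i - 2) := by
      calc 3 = 3 * 1 := by omega
      _ ≤ g i * (g i - 2) := Nat.mul_le_mul h3 (by omega)
    have hle : g i * (g i - 2) ≤ ∑ i ∈ B, g i * (g i - 2) :=
      Finset.single_le_sum (f := fun i => g i * (g i - 2)) (fun i _ => Nat.zero_le _) hi
    omega

/-- Distance bound for LRC codes whose recovering sets come from `t` mutually orthogonal
partitions of the coordinate set: if every coordinate of every codeword is determined by the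
other coordinates of any block containing it, and `m` is the smallest positive integer with
`t·f(m) ≤ C(m,2)` (equivalently `t·m ≤ m(m-1)` for even `m` and `t·(m+3) ≤ m(m-1)` for odd
`m`), then the minimum Hamming distance of the code is at least `m`. -/
theorem stmt_17 {F : Type*} [DecidableEq F] (n t m : ℕ)
    (C : Set (Fin n → F))
    (P : Fin t → Finset (Finset (Fin n)))
    (hblocks : ∀ j, ∀ X ∈ P j, X.Nonempty)
    (hpart : ∀ j, ∀ i : Fin n, ∃! X, X ∈ P j ∧ i ∈ X)
    (horth : ∀ j j', j ≠ j' → ∀ X ∈ P j, ∀ Y ∈ P j', (X ∩ Y).card ≤ 1)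
    (hloc : ∀ x ∈ C, ∀ y ∈ C, ∀ j, ∀ X ∈ P j, ∀ i ∈ X,
      (∀ l ∈ X.erase i, x l = y l) → x i = y i)
    (hm₀ : 0 < m)
    (hm₁ : (if Even m then t * m else t * (m + 3)) ≤ m * (m - 1))
    (hm₂ : ∀ m', 0 < m' →
      (if Even m' then t * m' else t * (m' + 3)) ≤ m' * (m' - 1) → m ≤ m') :
    ∀ x ∈ C, ∀ y ∈ C, x ≠ y → m ≤ hammingDist x y := by
  classical
  intro x hx y hy hxy
  set S : Finset (Fin n) := Finset.univ.filter (fun i => x i ≠ y i) with hSdef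
  have hdist : hammingDist x y = S.card := rfl
  set d := S.card with hd
  have hd0 : 0 < d := by
    rw [hd, Finset.card_pos]
    obtain ⟨i, hi⟩ := Function.ne_iff.mp hxy
    exact ⟨i, by simp [hSdef, hi]⟩
  rw [hdist]
  refine hm₂ d hd0 ?_
  -- every block meeting S at some point of S meets it twice
  have hA : ∀ j, ∀ X ∈ P j, ∀ i ∈ X, i ∈ S → 2 ≤ (X ∩ S).card := by
    intro j X hX i hiX hiS
    by_contra hlt
    push_neg at hlt
    have hiXS : i ∈ X ∩ S := Finset.mem_inter.mpr ⟨hiX, hiS⟩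
    have h1 : (X ∩ S).card = 1 := le_antisymm (by omega) (Finset.card_pos.mpr ⟨i, hiXS⟩)
    obtain ⟨a, ha⟩ := Finset.card_eq_one.mp h1
    have hia : i = a := by rw [ha] at hiXS; simpa using hiXS
    have hagree : ∀ l ∈ X.erase i, x l = y l := by
      intro l hl
      rw [Finset.mem_erase] at hl
      by_contra hne
      have hls : l ∈ X ∩ S := Finset.mem_inter.mpr ⟨hl.2, by simp [hSdef, hne]⟩
      rw [ha] at hls
      simp only [Finset.mem_singleton] at hls
      exact hl.1 (hls.trans hia.symm)
    have heq := hloc x hx y hy j X hX i hiX hagree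
    have hne : x i ≠ y i := by
      have := hiS
      rw [hSdef, Finset.mem_filter] at this
      exact this.2
    exact hne heq
  -- blocks of a partition are pairwise disjoint
  have hdisj : ∀ j, ∀ X ∈ P j, ∀ Y ∈ P j, X ≠ Y → Disjoint X Y := by
    intro j X hX Y hY hne
    rw [Finset.disjoint_left]
    intro i hiX hiY
    obtain ⟨Z, _, huniq⟩ := hpart j i
    exact hne ((huniq X ⟨hX, hiX⟩).trans (huniq Y ⟨hY, hiY⟩).symm)
  set Q : Fin t → Finset (Finset (Fin n)) := fun j =>
    (S.powersetCard 2).filter (fun p => ∃ X ∈ P j, p ⊆ X) with hQ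
  have hdisj' : ∀ j, ∀ X ∈ P j, ∀ Y ∈ P j, X ≠ Y → Disjoint (X ∩ S) (Y ∩ S) := by
    intro j X hX Y hY hne
    exact (hdisj j X hX Y hY hne).mono Finset.inter_subset_left Finset.inter_subset_left
  have hlow : ∀ j : Fin t, (if Even d then d else d + 3) ≤ 2 * (Q j).card := by
    intro j
    have hcover : S = (P j).biUnion (fun X => X ∩ S) := by
      ext i
      simp only [Finset.mem_biUnion, Finset.mem_inter]
      constructor
      · intro hi
        obtain ⟨X, ⟨hX, hiX⟩, _⟩ := hpart j i
        exact ⟨X, hX, hiX, hi⟩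
      · rintro ⟨X, _, _, hi⟩; exact hi
    have hsum : ∑ X ∈ P j, (X ∩ S).card = d := by
      rw [hd]
      conv_rhs => rw [hcover]
      rw [Finset.card_biUnion (hdisj' j)]
    set B := (P j).filter (fun X => (X ∩ S).Nonempty) with hB
    have hsumB : ∑ X ∈ B, (X ∩ S).card = d := by
      rw [← hsum, hB]
      refine (Finset.sum_filter_of_ne ?_)
      intro X _ hcard
      exact Finset.card_pos.mp (Nat.pos_of_ne_zero hcard)
    have h2 : ∀ X ∈ B, 2 ≤ (X ∩ S).card := by
      intro X hXB
      rw [hB, Finset.mem_filter] at hXB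
      obtain ⟨i, hi⟩ := hXB.2
      rw [Finset.mem_inter] at hi
      exact hA j X hXB.1 i hi.1 hi.2
    have hpb := parts_bound B (fun X => (X ∩ S).card) h2 hsumB
    have hsub : B.biUnion (fun X => (X ∩ S).powersetCard 2) ⊆ Q j := by
      intro p hp
      rw [Finset.mem_biUnion] at hp
      obtain ⟨X, hXB, hp⟩ := hp
      rw [Finset.mem_powersetCard] at hp
      have hXP : X ∈ P j := (Finset.mem_filter.mp (hB ▸ hXB)).1
      rw [hQ]
      simp only [Finset.mem_filter, Finset.mem_powersetCard]
      exact ⟨⟨hp.1.trans Finset.inter_subset_right, hp.2⟩,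
        X, hXP, hp.1.trans Finset.inter_subset_left⟩
    have hdisjP : ∀ X ∈ B, ∀ Y ∈ B, X ≠ Y →
        Disjoint ((X ∩ S).powersetCard 2) ((Y ∩ S).powersetCard 2) := by
      intro X hXB Y hYB hne
      rw [Finset.disjoint_left]
      intro p hpX hpY
      rw [Finset.mem_powersetCard] at hpX hpY
      obtain ⟨a, ha⟩ : p.Nonempty := Finset.card_pos.mp (by omega)
      have hXP : X ∈ P j := (Finset.mem_filter.mp (hB ▸ hXB)).1
      have hYP : Y ∈ P j := (Finset.mem_filter.mp (hB ▸ hYB)).1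
      exact Finset.disjoint_left.mp (hdisj' j X hXP Y hYP hne) (hpX.1 ha) (hpY.1 ha)
    have hcard : ∑ X ∈ B, ((X ∩ S).card).choose 2 ≤ (Q j).card := by
      calc ∑ X ∈ B, ((X ∩ S).card).choose 2
          = ∑ X ∈ B, ((X ∩ S).powersetCard 2).card := by
            simp [Finset.card_powersetCard]
        _ = (B.biUnion (fun X => (X ∩ S).powersetCard 2)).card :=
            (Finset.card_biUnion hdisjP).symm
        _ ≤ (Q j).card := Finset.card_le_card hsub
    calc (if Even d then d else d + 3)
        ≤ ∑ X ∈ B, (X ∩ S).card * ((X ∩ S).card - 1) := hpb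
      _ = ∑ X ∈ B, 2 * ((X ∩ S).card).choose 2 := by
          refine Finset.sum_congr rfl fun X _ => ?_
          rw [two_mul_choose_two]
      _ = 2 * ∑ X ∈ B, ((X ∩ S).card).choose 2 := by rw [Finset.mul_sum]
      _ ≤ 2 * (Q j).card := Nat.mul_le_mul_left 2 hcard
  have hupper : ∑ j : Fin t, (Q j).card ≤ d.choose 2 := by
    have hdisjQ : ∀ j ∈ (Finset.univ : Finset (Fin t)), ∀ j' ∈ Finset.univ, j ≠ j' →
        Disjoint (Q j) (Q j') := by
      intro j _ j' _ hne
      rw [Finset.disjoint_left]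
      intro p hpj hpj'
      rw [hQ] at hpj hpj'
      simp only [Finset.mem_filter] at hpj hpj'
      obtain ⟨X, hX, hpX⟩ := hpj.2
      obtain ⟨Y, hY, hpY⟩ := hpj'.2
      have hsub2 : p ⊆ X ∩ Y := fun a ha => Finset.mem_inter.mpr ⟨hpX ha, hpY ha⟩
      have hle := Finset.card_le_card hsub2
      have h2 : p.card = 2 := (Finset.mem_powersetCard.mp hpj.1).2
      have := horth j j' hne X hX Y hY
      omega
    calc ∑ j : Fin t, (Q j).card
        = (Finset.univ.biUnion Q).card := (Finset.card_biUnion hdisjQ).symm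
      _ ≤ (S.powersetCard 2).card := Finset.card_le_card
          (Finset.biUnion_subset.mpr fun j _ => by rw [hQ]; exact Finset.filter_subset _ _)
      _ = d.choose 2 := by rw [Finset.card_powersetCard, hd]
  have hfinal : t * (if Even d then d else d + 3) ≤ 2 * d.choose 2 := by
    calc t * (if Even d then d else d + 3)
        = ∑ _j : Fin t, (if Even d then d else d + 3) := by
          rw [Finset.sum_const, Finset.card_univ, Fintype.card_fin, smul_eq_mul]
      _ ≤ ∑ j : Fin t, 2 * (Q j).card := Finset.sum_le_sum fun j _ => hlow j
      _ = 2 * ∑ j : Fin t, (Q j).card := by rw [Finset.mul_sum]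
      _ ≤ 2 * d.choose 2 := Nat.mul_le_mul_left 2 hupper
  rw [two_mul_choose_two] at hfinal
  split_ifs at hfinal ⊢ with he <;> exact hfinal
end

section
/- Let F_q be a finite field and let n, k, r, ρ be positive integers with ρ ≥ 2, (r+ρ−1) | n, r | k, n ≤ q, and k/r ≤ n/(r+ρ−1). Let A ⊆ F_q with |A| = n, let 𝒜 = {A_1,...,A_m}, m = n/(r+ρ−1), be a partition of A into blocks of size r+ρ−1, and let g ∈ F_q[x] be a polynomial of degree r+ρ−1 constant on each block. For a = (a_{ij}), 0 ≤ i ≤ r−1, 0 ≤ j ≤ k/r−1, define f_a(x) = ∑_{i=0}^{r−1} (∑_{j=0}^{k/r−1} a_{ij} g(x)^j) x^i and C = {(f_a(α))_{α∈A} : a ∈ F_q^k}. Then C is a linear code of dimension k with minimum Hamming distance at least n − k + 1 − (k/r − 1)(ρ−1), and for every a and every block A_i the restriction of f_a to A_i agrees with a polynomial of degree at most r−1 (so any r of the r+ρ−1 codeword symbols indexed by a block determine all symbols of that block). -/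
open Polynomial

lemma base_g_unique' {F : Type*} [Field F] (g : F[X]) (hg0 : 0 < g.natDegree) :
    ∀ (t : ℕ) (P : Fin t → F[X]), (∀ j, (P j).natDegree < g.natDegree) →
      (∑ j, P j * g ^ (j : ℕ)) = 0 → ∀ j, P j = 0 := by
  have hgne : g ≠ 0 := fun h => by simp [h] at hg0
  intro t
  induction t with
  | zero => intro P _ _ j; exact j.elim0
  | succ t ih =>
    intro P hP hsum j
    rw [Fin.sum_univ_succ] at hsum
    set Q := ∑ j : Fin t, P j.succ * g ^ (j : ℕ) with hQdef
    have h2 : (∑ j : Fin t, P j.succ * g ^ ((j.succ : Fin (t+1)) : ℕ)) = g * Q := by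
      rw [hQdef, Finset.mul_sum]
      refine Finset.sum_congr rfl fun x _ => ?_
      rw [Fin.val_succ, pow_succ]; ring
    rw [h2] at hsum
    have h0 : P 0 = -(g * Q) := by
      have : ((0 : Fin (t+1)) : ℕ) = 0 := rfl
      rw [this, pow_zero, mul_one] at hsum
      linear_combination hsum
    have hQ0 : Q = 0 := by
      by_contra hne
      have hd : (P 0).natDegree = g.natDegree + Q.natDegree := by
        rw [h0, natDegree_neg, natDegree_mul hgne hne]
      have := hP 0
      omega
    have hP0 : P 0 = 0 := by rw [h0, hQ0, mul_zero, neg_zero]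
    have hrest := ih (fun j => P j.succ) (fun j => hP j.succ) (by rw [← hQdef, hQ0])
    refine Fin.cases hP0 (fun j => hrest j) j

/-- The `(n, k, r, ρ)` LRC construction with `(r+ρ-1, r)` local MDS codes: with
`(r+ρ-1) ∣ n`, `r ∣ k`, `k/r ≤ n/(r+ρ-1)`, `n ≤ q`, an evaluation set `A` of size `n`
partitioned into blocks of size `r+ρ-1`, and a good polynomial `g` of degree `r+ρ-1`
constant on each block, the code given by the encoding polynomials
`f_a(x) = ∑_{i<r} (∑_{j<k/r} a_{ij} g(x)^j) x^i` is linear of dimension `k`, its minimum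
distance is at least `n - k + 1 - (k/r - 1)(ρ-1)`, and on each block the restriction of
`f_a` agrees with a polynomial of degree at most `r-1` (hence any `r` of the `r+ρ-1`
symbols of a block determine all symbols of that block). -/
theorem stmt_19 {F : Type*} [Field F] [Fintype F] [DecidableEq F]
    (n k r ρ : ℕ) (hr : 1 ≤ r) (hk : 1 ≤ k) (hρ : 2 ≤ ρ)
    (hn : n ≤ Fintype.card F) (hdvd : (r + ρ - 1) ∣ n) (hrk : r ∣ k)
    (hkm : k / r ≤ n / (r + ρ - 1))
    (A : Finset F) (hA : A.card = n)
    (B : Fin (n / (r + ρ - 1)) → Finset F)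
    (hBcard : ∀ i, (B i).card = r + ρ - 1)
    (hBdisj : ∀ i j, i ≠ j → Disjoint (B i) (B j))
    (hBunion : Finset.univ.biUnion B = A)
    (g : Polynomial F) (hg : g.natDegree = r + ρ - 1)
    (hgconst : ∀ i, ∀ α ∈ B i, ∀ β ∈ B i, g.eval α = g.eval β)
    (f : (Fin r → Fin (k / r) → F) → Polynomial F)
    (hf : ∀ a, f a =
      ∑ i : Fin r, (∑ j : Fin (k / r), Polynomial.C (a i j) * g ^ (j : ℕ)) * X ^ (i : ℕ))
    (C : Set (↥A → F))
    (hC : C = {c | ∃ a, c = fun α : ↥A => (f a).eval (α : F)}) :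
    (∃ W : Submodule F (↥A → F), (W : Set (↥A → F)) = C ∧ Module.finrank F W = k) ∧
    (∀ x ∈ C, ∀ y ∈ C, x ≠ y →
      (n : ℤ) - (k : ℤ) + 1 - ((k / r : ℕ) - 1 : ℤ) * ((ρ : ℤ) - 1) ≤
        (hammingDist x y : ℤ)) ∧
    (∀ a, ∀ i, ∃ δ : Polynomial F, δ.degree < (r : ℕ) ∧
        ∀ β ∈ B i, δ.eval β = (f a).eval β) ∧
    (∀ a b, ∀ i, ∀ T ⊆ B i, T.card = r →
      (∀ β ∈ T, (f a).eval β = (f b).eval β) →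
      ∀ α ∈ B i, (f a).eval α = (f b).eval α) := by
  classical
  have hrk' : r ≤ k := Nat.le_of_dvd hk hrk
  have ht1 : 1 ≤ k / r := (Nat.one_le_div_iff (by omega)).mpr hrk'
  have hkt : r * (k / r) = k := Nat.mul_div_cancel' hrk
  have hns : (n / (r + ρ - 1)) * (r + ρ - 1) = n := Nat.div_mul_cancel hdvd
  have hm1 : 1 ≤ n / (r + ρ - 1) := le_trans ht1 hkm
  have hsr : r + 1 ≤ r + ρ - 1 := by omega
  -- degree bound
  have hDfa : ∀ a, (f a).natDegree ≤ (k / r - 1) * (r + ρ - 1) + (r - 1) := by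
    intro a
    rw [hf a]
    refine natDegree_sum_le_of_forall_le _ _ fun i _ => ?_
    refine natDegree_mul_le.trans ?_
    have h1 : (∑ j : Fin (k / r), Polynomial.C (a i j) * g ^ (j : ℕ)).natDegree
        ≤ (k / r - 1) * (r + ρ - 1) := by
      refine natDegree_sum_le_of_forall_le _ _ fun j _ => ?_
      refine natDegree_mul_le.trans ?_
      have h2 : (g ^ (j : ℕ)).natDegree ≤ (j : ℕ) * (r + ρ - 1) := by
        refine (natDegree_pow_le).trans ?_
        rw [hg]
      have hj : (j : ℕ) ≤ k / r - 1 := by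
        have := j.isLt; omega
      have h4 := Nat.mul_le_mul_right (r + ρ - 1) hj
      simp only [natDegree_C, add_zero, zero_add]
      omega
    have h3 : ((X : F[X]) ^ (i : ℕ)).natDegree ≤ r - 1 := by
      rw [natDegree_X_pow]
      have := i.isLt; omega
    omega
  have hDn : (k / r - 1) * (r + ρ - 1) + (r - 1) < n := by
    have h1 : (k / r - 1) * (r + ρ - 1) ≤ (n / (r + ρ - 1) - 1) * (r + ρ - 1) :=
      Nat.mul_le_mul_right _ (by omega)
    have h2 : (n / (r + ρ - 1) - 1) * (r + ρ - 1) + (r + ρ - 1)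
        = (n / (r + ρ - 1)) * (r + ρ - 1) := by
      rw [Nat.sub_one_mul]
      have : r + ρ - 1 ≤ (n / (r + ρ - 1)) * (r + ρ - 1) :=
        Nat.le_mul_of_pos_left _ (by omega)
      omega
    omega
  -- linearity
  have hadd : ∀ a b, f (a + b) = f a + f b := by
    intro a b
    simp only [hf, Pi.add_apply, C_add, add_mul, Finset.sum_add_distrib]
  have hsmul : ∀ (c : F) a, f (c • a) = Polynomial.C c * f a := by
    intro c a
    rw [hf, hf, Finset.mul_sum]
    refine Finset.sum_congr rfl fun i _ => ?_
    rw [Finset.sum_mul, Finset.sum_mul, Finset.mul_sum]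
    refine Finset.sum_congr rfl fun j _ => ?_
    simp only [Pi.smul_apply, smul_eq_mul, C_mul]
    ring
  -- kernel triviality
  have hker : ∀ a, f a = 0 → a = 0 := by
    intro a hfa
    have hregroup : f a
        = ∑ j : Fin (k / r), (∑ i : Fin r, Polynomial.C (a i j) * X ^ (i : ℕ)) * g ^ (j : ℕ) := by
      rw [hf a]
      simp_rw [Finset.sum_mul]
      rw [Finset.sum_comm]
      refine Finset.sum_congr rfl fun j _ => Finset.sum_congr rfl fun i _ => by ring
    have hg0 : 0 < g.natDegree := by omega
    have hPdeg : ∀ j : Fin (k / r),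
        (∑ i : Fin r, Polynomial.C (a i j) * X ^ (i : ℕ)).natDegree < g.natDegree := by
      intro j
      have hle : (∑ i : Fin r, Polynomial.C (a i j) * X ^ (i : ℕ)).natDegree ≤ r - 1 := by
        refine natDegree_sum_le_of_forall_le _ _ fun i _ => ?_
        refine natDegree_mul_le.trans ?_
        rw [natDegree_C, natDegree_X_pow]
        have := i.isLt; omega
      omega
    have hPzero := base_g_unique' g hg0 (k / r) _ hPdeg (by rw [← hregroup, hfa])
    funext i j
    have hcoeff : (∑ i' : Fin r, Polynomial.C (a i' j) * X ^ (i' : ℕ)).coeff (i : ℕ) = a i j := by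
      rw [finset_sum_coeff]
      simp only [coeff_C_mul, coeff_X_pow]
      rw [Finset.sum_eq_single i]
      · simp
      · intro b _ hb
        have hne : (i : ℕ) ≠ (b : ℕ) := fun h => hb (Fin.ext h.symm)
        simp [hne]
      · simp
    rw [hPzero j] at hcoeff
    simp only [coeff_zero] at hcoeff
    simp [← hcoeff]
  -- the linear map
  let φ : (Fin r → Fin (k / r) → F) →ₗ[F] (↥A → F) :=
    { toFun := fun a => fun α => (f a).eval (α : F)
      map_add' := by intro a b; funext α; simp [hadd]
      map_smul' := by intro c a; funext α; simp [hsmul] }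
  have hφinj : Function.Injective φ := by
    rw [injective_iff_map_eq_zero]
    intro a ha
    refine hker a ?_
    refine Polynomial.eq_zero_of_natDegree_lt_card_of_eval_eq_zero' (f a) A ?_ ?_
    · intro α hα
      exact congrFun ha ⟨α, hα⟩
    · rw [hA]; exact lt_of_le_of_lt (hDfa a) hDn
  have hrange : ((LinearMap.range φ : Submodule F (↥A → F)) : Set (↥A → F)) = C := by
    rw [hC]
    ext c
    simp only [SetLike.mem_coe, LinearMap.mem_range, Set.mem_setOf_eq]
    constructor
    · rintro ⟨a, rfl⟩; exact ⟨a, rfl⟩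
    · rintro ⟨a, rfl⟩; exact ⟨a, rfl⟩
  refine ⟨⟨LinearMap.range φ, hrange, ?_⟩, ?_, ?_, ?_⟩
  · rw [LinearMap.finrank_range_of_inj hφinj]
    simp only [Module.finrank_pi_fintype, Module.finrank_fintype_fun_eq_card,
      Module.finrank_self, Fintype.card_fin, Finset.sum_const, Finset.card_univ,
      smul_eq_mul, mul_one]
    exact hkt
  · -- distance bound
    rintro x hx y hy hxy
    rw [hC] at hx hy
    obtain ⟨a, rfl⟩ := hx
    obtain ⟨b, rfl⟩ := hy
    have hpne : f a - f b ≠ 0 := by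
      intro h
      apply hxy
      have hfe : f a = f b := by rwa [sub_eq_zero] at h
      simp [hfe]
    have hpdeg : (f a - f b).natDegree ≤ (k / r - 1) * (r + ρ - 1) + (r - 1) :=
      (natDegree_sub_le _ _).trans (by simp [hDfa a, hDfa b])
    have hZD : (Finset.univ.filter
        (fun α : ↥A => (f a).eval (α : F) = (f b).eval (α : F))).card
        ≤ (k / r - 1) * (r + ρ - 1) + (r - 1) := by
      by_contra hlt
      apply hpne
      refine Polynomial.eq_zero_of_natDegree_lt_card_of_eval_eq_zero (f a - f b)
        (f := fun z : {z : ↥A // z ∈ Finset.univ.filter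
          (fun α : ↥A => (f a).eval (α : F) = (f b).eval (α : F))} => ((z : ↥A) : F))
        (fun z1 z2 h12 => Subtype.ext (Subtype.ext h12)) ?_ ?_
      · rintro ⟨⟨α, hαA⟩, hαZ⟩
        simp only [Finset.mem_filter] at hαZ
        simp [sub_eq_zero, hαZ.2]
      · rw [Fintype.card_coe]; omega
    have hsum := Finset.card_filter_add_card_filter_not
      (s := (Finset.univ : Finset ↥A))
      (fun α : ↥A => (f a).eval (α : F) = (f b).eval (α : F))
    rw [Finset.card_univ, Fintype.card_coe, hA] at hsum
    have hdist : hammingDist (fun α : ↥A => (f a).eval (α : F))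
        (fun α : ↥A => (f b).eval (α : F))
        = (Finset.univ.filter (fun α : ↥A =>
            ¬ (f a).eval (α : F) = (f b).eval (α : F))).card := rfl
    have hcast : (((k / r - 1) * (r + ρ - 1) + (r - 1) : ℕ) : ℤ)
        = ((k / r : ℕ) - 1 : ℤ) * ((r : ℤ) + (ρ : ℤ) - 1) + ((r : ℤ) - 1) := by
      have e1 : ((k / r - 1 : ℕ) : ℤ) = ((k / r : ℕ) : ℤ) - 1 := by omega
      have e2 : ((r + ρ - 1 : ℕ) : ℤ) = (r : ℤ) + (ρ : ℤ) - 1 := by omega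
      have e3 : ((r - 1 : ℕ) : ℤ) = (r : ℤ) - 1 := by omega
      push_cast [e1, e2, e3]
      ring
    have hkz : (k : ℤ) = (r : ℤ) * ((k / r : ℕ) : ℤ) := by
      exact_mod_cast congrArg (Nat.cast : ℕ → ℤ) hkt.symm
    have hge : (n : ℤ) - (((k / r - 1) * (r + ρ - 1) + (r - 1) : ℕ) : ℤ)
        ≤ (hammingDist (fun α : ↥A => (f a).eval (α : F))
            (fun α : ↥A => (f b).eval (α : F)) : ℤ) := by
      rw [hdist]
      omega
    rw [hcast] at hge
    nlinarith [hge, hkz]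
  · -- local polynomial of degree < r on each block
    intro a i
    have hBne : (B i).Nonempty := Finset.card_pos.mp (by rw [hBcard i]; omega)
    obtain ⟨β0, hβ0⟩ := hBne
    refine ⟨∑ i' : Fin r, Polynomial.C (∑ j : Fin (k / r), a i' j * (g.eval β0) ^ (j : ℕ))
        * X ^ (i' : ℕ), ?_, ?_⟩
    · refine lt_of_le_of_lt (degree_sum_le _ _) ?_
      rw [Finset.sup_lt_iff (by exact_mod_cast WithBot.bot_lt_coe r)]
      intro i' _
      refine lt_of_le_of_lt (degree_C_mul_X_pow_le _ _) ?_
      exact_mod_cast i'.isLt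
    · intro β hβ
      have hgβ : g.eval β = g.eval β0 := hgconst i β hβ β0 hβ0
      rw [hf a]
      simp only [eval_finset_sum, eval_mul, eval_pow, eval_C, eval_X, hgβ]
  · -- locality
    intro a b i T hT hTcard hagree α hα
    have hBne : (B i).Nonempty := Finset.card_pos.mp (by rw [hBcard i]; omega)
    obtain ⟨β0, hβ0⟩ := hBne
    have key : ∀ (aa : Fin r → Fin (k / r) → F) (β : F), β ∈ B i →
        (f aa).eval β = (∑ i' : Fin r, Polynomial.C (∑ j : Fin (k / r),
          aa i' j * (g.eval β0) ^ (j : ℕ)) * X ^ (i' : ℕ)).eval β := by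
      intro aa β hβ
      have hgβ : g.eval β = g.eval β0 := hgconst i β hβ β0 hβ0
      rw [hf aa]
      simp only [eval_finset_sum, eval_mul, eval_pow, eval_C, eval_X, hgβ]
    set δa := ∑ i' : Fin r, Polynomial.C (∑ j : Fin (k / r),
      a i' j * (g.eval β0) ^ (j : ℕ)) * X ^ (i' : ℕ) with hδa
    set δb := ∑ i' : Fin r, Polynomial.C (∑ j : Fin (k / r),
      b i' j * (g.eval β0) ^ (j : ℕ)) * X ^ (i' : ℕ) with hδb
    have hdeg : ∀ (cc : Fin r → F[X] → F[X]), True := fun _ => trivial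
    have hdegδ : ∀ cc : Fin r → F,
        (∑ i' : Fin r, Polynomial.C (cc i') * X ^ (i' : ℕ)).degree < ((r : ℕ) : WithBot ℕ) := by
      intro cc
      refine lt_of_le_of_lt (degree_sum_le _ _) ?_
      rw [Finset.sup_lt_iff (by exact_mod_cast WithBot.bot_lt_coe r)]
      intro i' _
      refine lt_of_le_of_lt (degree_C_mul_X_pow_le _ _) ?_
      exact_mod_cast i'.isLt
    have hδ0 : δa - δb = 0 := by
      refine Polynomial.eq_zero_of_degree_lt_of_eval_finset_eq_zero T ?_ ?_
      · rw [hTcard]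
        refine lt_of_le_of_lt (degree_sub_le _ _) ?_
        exact max_lt (hdegδ _) (hdegδ _)
      · intro x hx
        have hxB : x ∈ B i := hT hx
        rw [eval_sub, ← key a x hxB, ← key b x hxB, hagree x hx, sub_self]
    have : δa = δb := by rwa [sub_eq_zero] at hδ0
    rw [key a α hα, key b α hα, ← hδa, ← hδb, this]
end
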